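/- arXiv:1903.05373 — 5 statements merged into one kernel-verified Lean document; each statement's English description precedes it below -/
import Mathlib

section
/- Let ρ ∈ M_{d1} ⊗ M_{d2} be a positive semidefinite matrix that can be written as ρ = A₁ ⊗ B₁ + A₂ ⊗ B₂ for some matrices A₁, A₂ ∈ M_{d1} and B₁, B₂ ∈ M_{d2}. Then ρ is separable; in fact there exist positive semidefinite matrices σ₁, σ₂ ∈ PSD_{d1} and τ₁, τ₂ ∈ PSD_{d2} such that ρ = σ₁ ⊗ τ₁ + σ₂ ⊗ τ₂. -/
open scoped Kronecker ComplexOrder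
open Matrix

section Basics
variable {n : Type*} [Fintype n] [DecidableEq n]

omit [DecidableEq n] in
lemma form_conjTranspose (M : Matrix n n ℂ) (x : n → ℂ) :
    star x ⬝ᵥ Mᴴ *ᵥ x = starRingEnd ℂ (star x ⬝ᵥ M *ᵥ x) := by
  simp only [dotProduct, mulVec, conjTranspose_apply, map_sum, _root_.map_mul, Pi.star_apply,
    Finset.mul_sum]
  rw [Finset.sum_comm]
  apply Finset.sum_congr rfl
  intro i _
  apply Finset.sum_congr rfl
  intro j _
  simp [RCLike.star_def]
  ring

lemma form_eq_zero_iff (M : Matrix n n ℂ) (h : ∀ x, star x ⬝ᵥ M *ᵥ x = 0) : M = 0 := by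
  have key : Matrix.toEuclideanLin M = 0 := by
    rw [← inner_map_self_eq_zero]
    intro x
    have h2 := h ((WithLp.equiv 2 (n → ℂ)) x)
    have heq : (inner ℂ (Matrix.toEuclideanLin M x) x : ℂ) =
        starRingEnd ℂ (star ((WithLp.equiv 2 (n → ℂ)) x) ⬝ᵥ
          M *ᵥ (WithLp.equiv 2 (n → ℂ)) x) := by
      rw [EuclideanSpace.inner_eq_star_dotProduct]
      simp only [ofLp_toEuclideanLin_apply]
      simp only [dotProduct, map_sum, _root_.map_mul, Pi.star_apply, RCLike.star_def]
      apply Finset.sum_congr rfl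
      intro i _
      simp [mul_comm]
    rw [heq, h2, map_zero]
  have h0 : Matrix.toEuclideanLin M = Matrix.toEuclideanLin 0 := by rw [key, map_zero]
  exact Matrix.toEuclideanLin.injective h0

lemma posSemidef_of_form (M : Matrix n n ℂ) (h : ∀ x, 0 ≤ star x ⬝ᵥ M *ᵥ x) :
    M.PosSemidef := by
  rw [posSemidef_iff_dotProduct_mulVec]
  constructor
  · have hreal : ∀ x, starRingEnd ℂ (star x ⬝ᵥ M *ᵥ x) = star x ⬝ᵥ M *ᵥ x := by
      intro x
      obtain ⟨hre, him⟩ := Complex.nonneg_iff.mp (h x)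
      exact Complex.conj_eq_iff_im.mpr him.symm
    have hz : M - Mᴴ = 0 := by
      apply form_eq_zero_iff
      intro x
      rw [Matrix.sub_mulVec, dotProduct_sub, form_conjTranspose, hreal, sub_self]
    exact (sub_eq_zero.mp hz).symm
  · exact h
end Basics

section Kron
variable {m n : Type*} [Fintype m] [Fintype n]

/-- elementary tensor of two vectors -/
def tensVec (x : m → ℂ) (y : n → ℂ) : m × n → ℂ := fun p => x p.1 * y p.2

lemma kron_conjTranspose' (A : Matrix m m ℂ) (B : Matrix n n ℂ) :
    (A ⊗ₖ B)ᴴ = Aᴴ ⊗ₖ Bᴴ := by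
  ext i j
  simp [conjTranspose_apply, kroneckerMap_apply]

lemma kron_mulVec (A : Matrix m m ℂ) (B : Matrix n n ℂ) (x : m → ℂ) (y : n → ℂ) :
    (A ⊗ₖ B) *ᵥ tensVec x y = tensVec (A *ᵥ x) (B *ᵥ y) := by
  ext p
  obtain ⟨i, j⟩ := p
  simp only [mulVec, dotProduct, kroneckerMap_apply, tensVec, Fintype.sum_prod_type]
  rw [Finset.sum_mul_sum]
  apply Finset.sum_congr rfl
  intro k _
  apply Finset.sum_congr rfl
  intro l _
  ring

lemma tens_dotProduct (x u : m → ℂ) (y v : n → ℂ) :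
    star (tensVec x y) ⬝ᵥ tensVec u v = (star x ⬝ᵥ u) * (star y ⬝ᵥ v) := by
  simp only [dotProduct, tensVec, Pi.star_apply, Fintype.sum_prod_type, star_mul']
  rw [Finset.sum_mul_sum]
  apply Finset.sum_congr rfl
  intro k _
  apply Finset.sum_congr rfl
  intro l _
  ring

lemma kron_form (A : Matrix m m ℂ) (B : Matrix n n ℂ) (x : m → ℂ) (y : n → ℂ) :
    star (tensVec x y) ⬝ᵥ (A ⊗ₖ B) *ᵥ tensVec x y
      = (star x ⬝ᵥ A *ᵥ x) * (star y ⬝ᵥ B *ᵥ y) := by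
  rw [kron_mulVec, tens_dotProduct]

/-- contraction of the second tensor factor against a vector `y` -/
noncomputable def contr (ρ : Matrix (m × n) (m × n) ℂ) (y : n → ℂ) : Matrix m m ℂ :=
  fun i j => ∑ k, ∑ l, (starRingEnd ℂ) (y k) * ρ (i, k) (j, l) * y l

lemma contr_kron (A : Matrix m m ℂ) (B : Matrix n n ℂ) (y : n → ℂ) :
    contr (A ⊗ₖ B) y = (star y ⬝ᵥ B *ᵥ y) • A := by
  ext i j
  simp only [contr, kroneckerMap_apply, Matrix.smul_apply, smul_eq_mul, dotProduct, mulVec,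
    Pi.star_apply, Finset.mul_sum, Finset.sum_mul]
  apply Finset.sum_congr rfl
  intro k _
  apply Finset.sum_congr rfl
  intro l _
  simp [RCLike.star_def]
  ring

lemma contr_add (ρ ρ' : Matrix (m × n) (m × n) ℂ) (y : n → ℂ) :
    contr (ρ + ρ') y = contr ρ y + contr ρ' y := by
  ext i j
  simp [contr, Finset.sum_add_distrib, mul_add, add_mul]

end Kron

section Single
variable {m n : Type*} [Fintype m] [Fintype n] [DecidableEq m] [DecidableEq n]

lemma exists_form_ne_zero (A : Matrix m m ℂ) (hA : A ≠ 0) :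
    ∃ x, star x ⬝ᵥ A *ᵥ x ≠ 0 := by
  by_contra hc
  push_neg at hc
  exact hA (form_eq_zero_iff A hc)

lemma form_smul (c : ℂ) (A : Matrix m m ℂ) (x : m → ℂ) :
    star x ⬝ᵥ (c • A) *ᵥ x = c * (star x ⬝ᵥ A *ᵥ x) := by
  rw [smul_mulVec, dotProduct_smul, smul_eq_mul]

lemma single_kron (A : Matrix m m ℂ) (B : Matrix n n ℂ) (h : (A ⊗ₖ B).PosSemidef) :
    ∃ σ τ, σ.PosSemidef ∧ τ.PosSemidef ∧ A ⊗ₖ B = σ ⊗ₖ τ := by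
  by_cases hA : A = 0
  · exact ⟨0, 0, Matrix.PosSemidef.zero, Matrix.PosSemidef.zero, by simp [hA]⟩
  by_cases hB : B = 0
  · exact ⟨0, 0, Matrix.PosSemidef.zero, Matrix.PosSemidef.zero, by simp [hB]⟩
  obtain ⟨x, hx⟩ := exists_form_ne_zero A hA
  obtain ⟨y, hy⟩ := exists_form_ne_zero B hB
  set α := star x ⬝ᵥ A *ᵥ x with hα
  set β := star y ⬝ᵥ B *ᵥ y with hβ
  have hαβ : 0 ≤ α * β := by
    have := h.dotProduct_mulVec_nonneg (tensVec x y)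
    rwa [kron_form] at this
  have hβA : ∀ x', 0 ≤ (star x' ⬝ᵥ A *ᵥ x') * β := by
    intro x'
    have := h.dotProduct_mulVec_nonneg (tensVec x' y)
    rwa [kron_form] at this
  have hαB : ∀ y', 0 ≤ α * (star y' ⬝ᵥ B *ᵥ y') := by
    intro y'
    have := h.dotProduct_mulVec_nonneg (tensVec x y')
    rwa [kron_form] at this
  have hβA_psd : (β • A).PosSemidef := by
    apply posSemidef_of_form
    intro x'
    rw [form_smul]
    calc (0:ℂ) ≤ (star x' ⬝ᵥ A *ᵥ x') * β := hβA x'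
      _ = β * (star x' ⬝ᵥ A *ᵥ x') := mul_comm _ _
  have hαB_psd : (α • B).PosSemidef := by
    apply posSemidef_of_form
    intro y'
    rw [form_smul]
    exact hαB y'
  have hne : α * β ≠ 0 := mul_ne_zero hx hy
  set r := (α * β).re with hr
  have hreal : α * β = (r : ℂ) := by
    obtain ⟨h1, h2⟩ := Complex.nonneg_iff.mp hαβ
    exact Complex.ext rfl h2.symm
  have hrpos : 0 < r := by
    rcases lt_or_eq_of_le (Complex.nonneg_iff.mp hαβ).1 with h'|h'
    · exact h'
    · exfalso
      apply hne
      rw [hreal]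
      norm_cast
      rw [hr]
      exact h'.symm
  refine ⟨((r:ℂ))⁻¹ • (β • A), α • B, ?_, hαB_psd, ?_⟩
  · apply posSemidef_of_form
    intro x'
    rw [form_smul]
    apply mul_nonneg _ (hβA_psd.dotProduct_mulVec_nonneg x')
    rw [show ((r:ℂ))⁻¹ = ((r⁻¹ : ℝ) : ℂ) by push_cast; ring]
    rw [Complex.nonneg_iff]
    constructor
    · simp [le_of_lt (inv_pos.mpr hrpos)]
    · simp
  · rw [smul_kronecker, smul_kronecker, kronecker_smul, smul_smul, smul_smul]
    have hrne : (r:ℂ) ≠ 0 := by exact_mod_cast ne_of_gt hrpos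
    have : (r:ℂ)⁻¹ * β * α = 1 := by
      rw [mul_assoc, mul_comm β α, hreal, inv_mul_cancel₀ hrne]
    rw [this, one_smul]
end Single


lemma cone_lemma (K : Set (ℝ × ℝ)) (hclosed : IsClosed K)
    (hadd : ∀ v w, v ∈ K → w ∈ K → v + w ∈ K)
    (hsmul : ∀ (t : ℝ) v, 0 ≤ t → v ∈ K → t • v ∈ K)
    (hpointed : ∀ v, v ∈ K → -v ∈ K → v = 0)
    (he1 : ((1:ℝ), (0:ℝ)) ∈ K) (he2 : ((0:ℝ), (1:ℝ)) ∈ K) :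
    ∃ a b : ℝ × ℝ, a ∈ K ∧ b ∈ K ∧ a.1 * b.2 - a.2 * b.1 ≠ 0 ∧
      ∀ v ∈ K, ∃ s t : ℝ, 0 ≤ s ∧ 0 ≤ t ∧ v = s • a + t • b := by
  have hQ : ∀ p q : ℝ, 0 ≤ p → 0 ≤ q → ((p, q) : ℝ × ℝ) ∈ K := by
    intro p q hp hq
    have : ((p, q) : ℝ × ℝ) = p • ((1:ℝ), (0:ℝ)) + q • ((0:ℝ), (1:ℝ)) := by
      simp [Prod.ext_iff]
    rw [this]
    exact hadd _ _ (hsmul _ _ hp he1) (hsmul _ _ hq he2)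
  have hvert : ∀ w ∈ K, w.1 = 0 → 0 ≤ w.2 := by
    intro w hw h1
    by_contra hc
    push_neg at hc
    have hmem : -w ∈ K := by
      have : -w = ((0:ℝ), -w.2) := by
        ext <;> simp [h1]
      rw [this]
      exact hQ 0 (-w.2) le_rfl (by linarith)
    have := hpointed w hw hmem
    rw [this] at hc
    simp at hc
  have hhoriz : ∀ w ∈ K, w.2 = 0 → 0 ≤ w.1 := by
    intro w hw h1
    by_contra hc
    push_neg at hc
    have hmem : -w ∈ K := by
      have : -w = ((-w.1 : ℝ), (0:ℝ)) := by
        ext <;> simp [h1]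
      rw [this]
      exact hQ (-w.1) 0 (by linarith) le_rfl
    have := hpointed w hw hmem
    rw [this] at hc
    simp at hc
  -- the right boundary ray
  set T : Set ℝ := {y : ℝ | ((1:ℝ), y) ∈ K} with hT
  have h0T : (0:ℝ) ∈ T := he1
  have hTclosed : IsClosed T := by
    have : T = (fun y : ℝ => ((1:ℝ), y)) ⁻¹' K := rfl
    rw [this]
    exact hclosed.preimage (by fun_prop)
  have hscaleT : ∀ v ∈ K, 0 < v.1 → v.2 / v.1 ∈ T := by
    intro v hv h1
    have hmem := hsmul v.1⁻¹ v (by positivity) hv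
    have : v.1⁻¹ • v = ((1:ℝ), v.2 / v.1) := by
      ext
      · simp [inv_mul_cancel₀ (ne_of_gt h1)]
      · simp [div_eq_inv_mul]
    rwa [this] at hmem
  have hTbdd : BddBelow T := by
    by_contra hb
    rw [not_bddBelow_iff] at hb
    have hex : ∀ n : ℕ, ∃ y, y ∈ T ∧ y < -(n+1) := fun n => hb (-(n+1))
    choose f hfT hflt using hex
    have hfneg : ∀ n, f n < 0 := by
      intro n
      have h2 : (0:ℝ) ≤ (n:ℝ) + 1 := by positivity
      linarith [hflt n]
    have hmemn : ∀ n : ℕ, (((-(f n))⁻¹ : ℝ), (-1 : ℝ)) ∈ K := by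
      intro n
      have hfne := hfneg n
      have hmem := hsmul (-(f n))⁻¹ ((1:ℝ), f n) (inv_nonneg.mpr (by linarith)) (hfT n)
      have : (-(f n))⁻¹ • (((1:ℝ), f n) : ℝ × ℝ) = (((-(f n))⁻¹ : ℝ), (-1 : ℝ)) := by
        ext
        · simp
        · simp only [Prod.smul_snd, smul_eq_mul]
          rw [inv_mul_eq_div, div_neg, div_self (ne_of_lt hfne)]
      rwa [this] at hmem
    have htend : Filter.Tendsto (fun n : ℕ => ((((-(f n))⁻¹ : ℝ), (-1 : ℝ)) : ℝ × ℝ))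
        Filter.atTop (nhds (((0:ℝ), (-1:ℝ)))) := by
      apply Filter.Tendsto.prodMk_nhds
      · apply squeeze_zero (g := fun n : ℕ => 1 / ((n:ℝ) + 1))
        · intro n
          have := hfneg n
          exact inv_nonneg.mpr (by linarith)
        · intro n
          have h2 : (0:ℝ) < (n:ℝ) + 1 := by positivity
          have h1 : ((n:ℝ) + 1) ≤ -(f n) := by linarith [hflt n]
          rw [one_div]
          exact inv_anti₀ h2 h1
        · exact tendsto_one_div_add_atTop_nhds_zero_nat
      · exact tendsto_const_nhds
    have hlim : (((0:ℝ), (-1:ℝ)) : ℝ × ℝ) ∈ K :=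
      hclosed.mem_of_tendsto htend (Filter.Eventually.of_forall hmemn)
    have := hvert _ hlim rfl
    norm_num at this
  set μ := sInf T with hμ
  have hμT : μ ∈ T := hTclosed.csInf_mem ⟨0, h0T⟩ hTbdd
  have hμle : μ ≤ 0 := csInf_le hTbdd h0T
  have key1 : ∀ v ∈ K, μ * v.1 ≤ v.2 := by
    intro v hv
    rcases le_or_gt v.1 0 with h|h
    · by_contra hc
      push_neg at hc
      have hw : (-v.1) • (((1:ℝ), μ) : ℝ × ℝ) + v ∈ K :=
        hadd _ _ (hsmul _ _ (by linarith) hμT) hv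
      have he : (-v.1) • (((1:ℝ), μ) : ℝ × ℝ) + v = ((0:ℝ), v.2 - v.1 * μ) := by
        ext <;> simp <;> ring
      rw [he] at hw
      have := hvert _ hw rfl
      simp only at this
      nlinarith
    · have hmem := hscaleT v hv h
      have : μ ≤ v.2 / v.1 := csInf_le hTbdd hmem
      calc μ * v.1 ≤ (v.2 / v.1) * v.1 := by nlinarith
        _ = v.2 := by field_simp
  -- the upper boundary ray
  set U : Set ℝ := {x : ℝ | ((x, (1:ℝ)) : ℝ × ℝ) ∈ K} with hU
  have h0U : (0:ℝ) ∈ U := he2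
  have hUclosed : IsClosed U := by
    have : U = (fun x : ℝ => ((x, (1:ℝ)) : ℝ × ℝ)) ⁻¹' K := rfl
    rw [this]
    exact hclosed.preimage (by fun_prop)
  have hscaleU : ∀ v ∈ K, 0 < v.2 → v.1 / v.2 ∈ U := by
    intro v hv h1
    have hmem := hsmul v.2⁻¹ v (by positivity) hv
    have : v.2⁻¹ • v = ((v.1 / v.2, (1:ℝ)) : ℝ × ℝ) := by
      ext
      · simp [div_eq_inv_mul]
      · simp [inv_mul_cancel₀ (ne_of_gt h1)]
    rwa [this] at hmem
  have hUbdd : BddBelow U := by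
    by_contra hb
    rw [not_bddBelow_iff] at hb
    have hex : ∀ n : ℕ, ∃ y, y ∈ U ∧ y < -(n+1) := fun n => hb (-(n+1))
    choose f hfU hflt using hex
    have hfneg : ∀ n, f n < 0 := by
      intro n
      have h2 : (0:ℝ) ≤ (n:ℝ) + 1 := by positivity
      linarith [hflt n]
    have hmemn : ∀ n : ℕ, (((-1 : ℝ), ((-(f n))⁻¹ : ℝ)) : ℝ × ℝ) ∈ K := by
      intro n
      have hfne := hfneg n
      have hmem := hsmul (-(f n))⁻¹ ((f n, (1:ℝ)) : ℝ × ℝ) (inv_nonneg.mpr (by linarith)) (hfU n)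
      have : (-(f n))⁻¹ • ((f n, (1:ℝ)) : ℝ × ℝ) = (((-1 : ℝ), ((-(f n))⁻¹ : ℝ)) : ℝ × ℝ) := by
        ext
        · simp only [Prod.smul_fst, smul_eq_mul]
          rw [inv_mul_eq_div, div_neg, div_self (ne_of_lt hfne)]
        · simp
      rwa [this] at hmem
    have htend : Filter.Tendsto (fun n : ℕ => ((((-1:ℝ), ((-(f n))⁻¹ : ℝ))) : ℝ × ℝ))
        Filter.atTop (nhds (((-1:ℝ), (0:ℝ)))) := by
      apply Filter.Tendsto.prodMk_nhds
      · exact tendsto_const_nhds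
      · apply squeeze_zero (g := fun n : ℕ => 1 / ((n:ℝ) + 1))
        · intro n
          have := hfneg n
          exact inv_nonneg.mpr (by linarith)
        · intro n
          have h2 : (0:ℝ) < (n:ℝ) + 1 := by positivity
          have h1 : ((n:ℝ) + 1) ≤ -(f n) := by linarith [hflt n]
          rw [one_div]
          exact inv_anti₀ h2 h1
        · exact tendsto_one_div_add_atTop_nhds_zero_nat
    have hlim : (((-1:ℝ), (0:ℝ)) : ℝ × ℝ) ∈ K :=
      hclosed.mem_of_tendsto htend (Filter.Eventually.of_forall hmemn)
    have := hhoriz _ hlim rfl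
    norm_num at this
  set ν := sInf U with hν
  have hνU : ν ∈ U := hUclosed.csInf_mem ⟨0, h0U⟩ hUbdd
  have hνle : ν ≤ 0 := csInf_le hUbdd h0U
  have key2 : ∀ v ∈ K, ν * v.2 ≤ v.1 := by
    intro v hv
    rcases le_or_gt v.2 0 with h|h
    · by_contra hc
      push_neg at hc
      have hw : (-v.2) • ((ν, (1:ℝ)) : ℝ × ℝ) + v ∈ K :=
        hadd _ _ (hsmul _ _ (by linarith) hνU) hv
      have he : (-v.2) • ((ν, (1:ℝ)) : ℝ × ℝ) + v = ((v.1 - v.2 * ν, (0:ℝ)) : ℝ × ℝ) := by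
        ext <;> simp <;> ring
      rw [he] at hw
      have := hhoriz _ hw rfl
      simp only at this
      nlinarith
    · have hmem := hscaleU v hv h
      have : ν ≤ v.1 / v.2 := csInf_le hUbdd hmem
      calc ν * v.2 ≤ (v.1 / v.2) * v.2 := by nlinarith
        _ = v.1 := by field_simp
  -- assemble
  have hμν : μ * ν ≤ 1 := by
    have := key1 _ hνU
    simpa using this
  have hD : 0 < 1 - μ * ν := by
    rcases lt_or_eq_of_le hμν with h|h
    · linarith
    · exfalso
      have hμne : μ ≠ 0 := by
        intro h0
        rw [h0] at h
        simp at h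
      have hμneg : μ < 0 := lt_of_le_of_ne hμle hμne
      have hmem : -(((1:ℝ), μ) : ℝ × ℝ) ∈ K := by
        have h2 : -(((1:ℝ), μ) : ℝ × ℝ) = (-μ) • ((ν, (1:ℝ)) : ℝ × ℝ) := by
          ext <;> simp <;> nlinarith
        rw [h2]
        exact hsmul _ _ (by linarith) hνU
      have := hpointed _ hμT hmem
      rw [Prod.ext_iff] at this
      simp at this
  refine ⟨((1:ℝ), μ), ((ν, (1:ℝ)) : ℝ × ℝ), hμT, hνU, by simp; nlinarith, ?_⟩
  intro v hv
  refine ⟨(v.1 - ν * v.2) / (1 - μ * ν), (v.2 - μ * v.1) / (1 - μ * ν), ?_, ?_, ?_⟩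
  · apply div_nonneg _ (le_of_lt hD)
    have := key2 v hv
    linarith
  · apply div_nonneg _ (le_of_lt hD)
    have := key1 v hv
    linarith
  · have hDne : (1 - μ * ν) ≠ 0 := ne_of_gt hD
    ext
    · simp only [Prod.fst_add, Prod.smul_fst, smul_eq_mul]
      rw [div_mul_eq_mul_div, div_mul_eq_mul_div, ← add_div, eq_div_iff hDne]
      ring
    · simp only [Prod.snd_add, Prod.smul_snd, smul_eq_mul]
      rw [div_mul_eq_mul_div, div_mul_eq_mul_div, ← add_div, eq_div_iff hDne]
      ring
section Herm
variable {m n : Type*} [Fintype m] [Fintype n] [DecidableEq m] [DecidableEq n]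

lemma herm_form_real (M : Matrix m m ℂ) (hM : M.IsHermitian) (x : m → ℂ) :
    star x ⬝ᵥ M *ᵥ x = (((star x ⬝ᵥ M *ᵥ x).re : ℝ) : ℂ) := by
  have h1 : starRingEnd ℂ (star x ⬝ᵥ M *ᵥ x) = star x ⬝ᵥ M *ᵥ x := by
    conv_rhs => rw [← hM]
    rw [form_conjTranspose]
  have h2 := Complex.conj_eq_iff_re.mp h1
  exact h2.symm

lemma pick_pair {Y : Type*} {𝕜 : Type*} [Field 𝕜] (f g : Y → 𝕜)
    (h : ∀ α β : 𝕜, (∀ y, α * f y + β * g y = 0) → α = 0 ∧ β = 0) :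
    ∃ y z, f y * g z - g y * f z ≠ 0 := by
  by_contra hc
  push_neg at hc
  have hex : ∃ y₀, ¬ (f y₀ = 0 ∧ g y₀ = 0) := by
    by_contra hall
    push_neg at hall
    have := h 1 0 (fun y => by
      rcases Classical.em (f y = 0 ∧ g y = 0) with ⟨h1, h2⟩|hy
      · simp [h1, h2]
      · exact absurd (hall y) (by tauto))
    simp at this
  obtain ⟨y₀, hy₀⟩ := hex
  have hαβ := h (g y₀) (-(f y₀)) (fun z => by linear_combination -1 * hc y₀ z)
  apply hy₀
  constructor
  · have := hαβ.2; simpa using this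
  · exact hαβ.1

set_option maxHeartbeats 1000000 in
lemma herm_case (H₁ H₂ : Matrix m m ℂ) (C₁ C₂ : Matrix n n ℂ)
    (hH1 : H₁.IsHermitian) (hH2 : H₂.IsHermitian)
    (hC1 : C₁.IsHermitian) (hC2 : C₂.IsHermitian)
    (hHind : ∀ u v : ℂ, u • H₁ + v • H₂ = 0 → u = 0 ∧ v = 0)
    (hCind : ∀ u v : ℂ, u • C₁ + v • C₂ = 0 → u = 0 ∧ v = 0)
    (hPSD : (H₁ ⊗ₖ C₁ + H₂ ⊗ₖ C₂).PosSemidef) :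
    ∃ σ₁ σ₂ τ₁ τ₂, σ₁.PosSemidef ∧ σ₂.PosSemidef ∧ τ₁.PosSemidef ∧ τ₂.PosSemidef ∧
      H₁ ⊗ₖ C₁ + H₂ ⊗ₖ C₂ = σ₁ ⊗ₖ τ₁ + σ₂ ⊗ₖ τ₂ := by
  classical
  set h1 : (m → ℂ) → ℝ := fun x => (star x ⬝ᵥ H₁ *ᵥ x).re with hh1
  set h2 : (m → ℂ) → ℝ := fun x => (star x ⬝ᵥ H₂ *ᵥ x).re with hh2
  set c1 : (n → ℂ) → ℝ := fun y => (star y ⬝ᵥ C₁ *ᵥ y).re with hc1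
  set c2 : (n → ℂ) → ℝ := fun y => (star y ⬝ᵥ C₂ *ᵥ y).re with hc2
  -- real combos of H's have real forms
  have hHcombo : ∀ (u v : ℝ) (x : m → ℂ),
      star x ⬝ᵥ ((u:ℂ) • H₁ + (v:ℂ) • H₂) *ᵥ x = (((u * h1 x + v * h2 x : ℝ)) : ℂ) := by
    intro u v x
    rw [add_mulVec, dotProduct_add, form_smul, form_smul,
      herm_form_real H₁ hH1 x, herm_form_real H₂ hH2 x]
    push_cast
    ring
  have hCcombo : ∀ (u v : ℝ) (y : n → ℂ),
      star y ⬝ᵥ ((u:ℂ) • C₁ + (v:ℂ) • C₂) *ᵥ y = (((u * c1 y + v * c2 y : ℝ)) : ℂ) := by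
    intro u v y
    rw [add_mulVec, dotProduct_add, form_smul, form_smul,
      herm_form_real C₁ hC1 y, herm_form_real C₂ hC2 y]
    push_cast
    ring
  -- pairing positivity
  have hform : ∀ x y, 0 ≤ h1 x * c1 y + h2 x * c2 y := by
    intro x y
    have hz := hPSD.dotProduct_mulVec_nonneg (tensVec x y)
    rw [add_mulVec, dotProduct_add, kron_form, kron_form,
      herm_form_real H₁ hH1 x, herm_form_real H₂ hH2 x,
      herm_form_real C₁ hC1 y, herm_form_real C₂ hC2 y] at hz
    have : ((h1 x * c1 y + h2 x * c2 y : ℝ) : ℂ) = ((h1 x :ℝ):ℂ) * ((c1 y:ℝ):ℂ) + ((h2 x:ℝ):ℂ) * ((c2 y:ℝ):ℂ) := by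
      push_cast; ring
    rw [← this] at hz
    exact_mod_cast (Complex.nonneg_iff.mp hz).1
  set K : Set (ℝ × ℝ) := {v | ∀ x, 0 ≤ v.1 * h1 x + v.2 * h2 x} with hK
  have hcyK : ∀ y, ((c1 y, c2 y) : ℝ × ℝ) ∈ K := by
    intro y x
    have := hform x y
    simp only
    linarith [hform x y]
  have hKclosed : IsClosed K := by
    have : K = ⋂ x : m → ℂ, {v : ℝ × ℝ | 0 ≤ v.1 * h1 x + v.2 * h2 x} := by
      ext v; simp [hK, Set.mem_iInter]
    rw [this]
    exact isClosed_iInter (fun x => isClosed_le continuous_const (by fun_prop))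
  have hKadd : ∀ v w, v ∈ K → w ∈ K → v + w ∈ K := by
    intro v w hv hw x
    have h1' := hv x
    have h2' := hw x
    simp only [Prod.fst_add, Prod.snd_add]
    nlinarith
  have hKsmul : ∀ (t : ℝ) v, 0 ≤ t → v ∈ K → t • v ∈ K := by
    intro t v ht hv x
    have := hv x
    simp only [Prod.smul_fst, Prod.smul_snd, smul_eq_mul]
    have heq : t * v.1 * h1 x + t * v.2 * h2 x = t * (v.1 * h1 x + v.2 * h2 x) := by ring
    rw [heq]
    exact mul_nonneg ht this
  have hKpointed : ∀ v, v ∈ K → -v ∈ K → v = 0 := by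
    intro v hv hnv
    have hz : ∀ x, v.1 * h1 x + v.2 * h2 x = 0 := by
      intro x
      have := hv x
      have h2' := hnv x
      simp only [Prod.fst_neg, Prod.snd_neg] at h2'
      linarith
    have hmat : (v.1 : ℂ) • H₁ + (v.2 : ℂ) • H₂ = 0 := by
      apply form_eq_zero_iff
      intro x
      rw [hHcombo, hz x]
      simp
    obtain ⟨ha, hb⟩ := hHind _ _ hmat
    have : v.1 = 0 := by exact_mod_cast ha
    have h2' : v.2 = 0 := by exact_mod_cast hb
    ext <;> simp [this, h2']
  -- pick two independent c-vectors
  have hpick : ∃ y z, c1 y * c2 z - c2 y * c1 z ≠ 0 := by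
    apply pick_pair
    intro α β hab
    have hmat : (α : ℂ) • C₁ + (β : ℂ) • C₂ = 0 := by
      apply form_eq_zero_iff
      intro y
      rw [hCcombo, hab y]
      simp
    obtain ⟨ha, hb⟩ := hCind _ _ hmat
    constructor
    · exact_mod_cast ha
    · exact_mod_cast hb
  obtain ⟨y₁, y₂, hΔ⟩ := hpick
  set q : ℝ × ℝ := (c1 y₁, c2 y₁) with hq
  set q' : ℝ × ℝ := (c1 y₂, c2 y₂) with hq'
  set Δ : ℝ := c1 y₁ * c2 y₂ - c2 y₁ * c1 y₂ with hΔdef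
  have hqK : q ∈ K := hcyK y₁
  have hq'K : q' ∈ K := hcyK y₂
  -- transformed cone
  set K' : Set (ℝ × ℝ) := {w | w.1 • q + w.2 • q' ∈ K} with hK'
  have hL : ∀ w : ℝ × ℝ, w.1 • q + w.2 • q' = ((w.1 * q.1 + w.2 * q'.1, w.1 * q.2 + w.2 * q'.2) : ℝ × ℝ) := by
    intro w; ext <;> simp
  have hK'closed : IsClosed K' := by
    have : K' = (fun w : ℝ × ℝ => ((w.1 * q.1 + w.2 * q'.1, w.1 * q.2 + w.2 * q'.2) : ℝ × ℝ)) ⁻¹' K := by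
      ext w; simp only [hK', Set.mem_setOf_eq, Set.mem_preimage, hL]
    rw [this]
    exact hKclosed.preimage (by fun_prop)
  have hK'add : ∀ v w, v ∈ K' → w ∈ K' → v + w ∈ K' := by
    intro v w hv hw
    have : (v + w).1 • q + (v + w).2 • q' = (v.1 • q + v.2 • q') + (w.1 • q + w.2 • q') := by
      ext <;> simp <;> ring
    simp only [hK', Set.mem_setOf_eq] at *
    rw [this]
    exact hKadd _ _ hv hw
  have hK'smul : ∀ (t : ℝ) v, 0 ≤ t → v ∈ K' → t • v ∈ K' := by
    intro t v ht hv
    have : (t • v).1 • q + (t • v).2 • q' = t • (v.1 • q + v.2 • q') := by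
      ext <;> simp <;> ring
    simp only [hK', Set.mem_setOf_eq] at *
    rw [this]
    exact hKsmul _ _ ht hv
  have hK'pointed : ∀ v, v ∈ K' → -v ∈ K' → v = 0 := by
    intro v hv hnv
    simp only [hK', Set.mem_setOf_eq] at hv hnv
    have hneg : (-v).1 • q + (-v).2 • q' = -(v.1 • q + v.2 • q') := by
      ext <;> simp <;> ring
    rw [hneg] at hnv
    have h0 := hKpointed _ hv hnv
    rw [hL v] at h0
    rw [Prod.ext_iff] at h0
    obtain ⟨e1, e2⟩ := h0
    simp only [hq, hq', Prod.fst_zero, Prod.snd_zero] at e1 e2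
    have hv1 : v.1 * Δ = 0 := by
      rw [hΔdef]
      linear_combination c2 y₂ * e1 - c1 y₂ * e2
    have hv2 : v.2 * Δ = 0 := by
      rw [hΔdef]
      linear_combination c1 y₁ * e2 - c2 y₁ * e1
    have h1' : v.1 = 0 := by
      rcases mul_eq_zero.mp hv1 with h|h
      · exact h
      · exact absurd h hΔ
    have h2' : v.2 = 0 := by
      rcases mul_eq_zero.mp hv2 with h|h
      · exact h
      · exact absurd h hΔ
    ext <;> simp [h1', h2']
  have he1' : ((1:ℝ), (0:ℝ)) ∈ K' := by
    simp only [hK', Set.mem_setOf_eq]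
    have : ((1:ℝ)) • q + ((0:ℝ)) • q' = q := by ext <;> simp
    rw [this]
    exact hqK
  have he2' : ((0:ℝ), (1:ℝ)) ∈ K' := by
    simp only [hK', Set.mem_setOf_eq]
    have : ((0:ℝ)) • q + ((1:ℝ)) • q' = q' := by ext <;> simp
    rw [this]
    exact hq'K
  obtain ⟨a', b', ha'K, hb'K, hdet', hcover'⟩ :=
    cone_lemma K' hK'closed hK'add hK'smul hK'pointed he1' he2'
  set a : ℝ × ℝ := a'.1 • q + a'.2 • q' with ha
  set b : ℝ × ℝ := b'.1 • q + b'.2 • q' with hb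
  have haK : a ∈ K := ha'K
  have hbK : b ∈ K := hb'K
  set D : ℝ := a.1 * b.2 - a.2 * b.1 with hD
  have hDΔ : D = (a'.1 * b'.2 - a'.2 * b'.1) * Δ := by
    rw [hD, ha, hb, hΔdef]
    simp only [hL, hq, hq', Prod.fst_add, Prod.snd_add, Prod.smul_fst, Prod.smul_snd, smul_eq_mul]
    ring
  have hDne : D ≠ 0 := by
    rw [hDΔ]
    exact mul_ne_zero hdet' hΔ
  -- the four matrices
  refine ⟨(a.1 : ℂ) • H₁ + (a.2 : ℂ) • H₂, (b.1 : ℂ) • H₁ + (b.2 : ℂ) • H₂,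
    ((b.2 / D : ℝ) : ℂ) • C₁ + ((-b.1 / D : ℝ) : ℂ) • C₂,
    ((-a.2 / D : ℝ) : ℂ) • C₁ + ((a.1 / D : ℝ) : ℂ) • C₂, ?_, ?_, ?_, ?_, ?_⟩
  · apply posSemidef_of_form
    intro x
    rw [hHcombo]
    have := haK x
    exact_mod_cast this
  · apply posSemidef_of_form
    intro x
    rw [hHcombo]
    have := hbK x
    exact_mod_cast this
  · -- τ₁ PSD
    apply posSemidef_of_form
    intro y
    rw [hCcombo]
    -- show 0 ≤ (b.2/D) * c1 y + (-b.1/D) * c2 y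
    -- write (c1 y, c2 y) = s • a + t • b
    obtain ⟨s, t, hs, ht, hst⟩ := hcover'
      (((c1 y * q'.2 - c2 y * q'.1)/Δ, (q.1 * c2 y - q.2 * c1 y)/Δ) : ℝ × ℝ)
      (by
        simp only [hK', Set.mem_setOf_eq, hL]
        have : ((((c1 y * q'.2 - c2 y * q'.1)/Δ) * q.1 + ((q.1 * c2 y - q.2 * c1 y)/Δ) * q'.1,
            ((c1 y * q'.2 - c2 y * q'.1)/Δ) * q.2 + ((q.1 * c2 y - q.2 * c1 y)/Δ) * q'.2) : ℝ × ℝ)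
            = ((c1 y, c2 y) : ℝ × ℝ) := by
          ext
          · simp only [hq, hq', hΔdef]
            rw [div_mul_eq_mul_div, div_mul_eq_mul_div, ← add_div, div_eq_iff (show c1 y₁ * c2 y₂ - c2 y₁ * c1 y₂ ≠ 0 from hΔ)]
            ring
          · simp only [hq, hq', hΔdef]
            rw [div_mul_eq_mul_div, div_mul_eq_mul_div, ← add_div, div_eq_iff (show c1 y₁ * c2 y₂ - c2 y₁ * c1 y₂ ≠ 0 from hΔ)]
            ring
        rw [this]
        exact hcyK y)
    -- now (c1 y, c2 y) = s • a + t • b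
    have hc_eq : ((c1 y, c2 y) : ℝ × ℝ) = s • a + t • b := by
      have h3 : ((c1 y * q'.2 - c2 y * q'.1)/Δ) • q + ((q.1 * c2 y - q.2 * c1 y)/Δ) • q'
          = ((c1 y, c2 y) : ℝ × ℝ) := by
        ext
        · simp only [Prod.fst_add, Prod.smul_fst, smul_eq_mul, hq, hq', hΔdef]
          rw [div_mul_eq_mul_div, div_mul_eq_mul_div, ← add_div, div_eq_iff (show c1 y₁ * c2 y₂ - c2 y₁ * c1 y₂ ≠ 0 from hΔ)]
          ring
        · simp only [Prod.snd_add, Prod.smul_snd, smul_eq_mul, hq, hq', hΔdef]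
          rw [div_mul_eq_mul_div, div_mul_eq_mul_div, ← add_div, div_eq_iff (show c1 y₁ * c2 y₂ - c2 y₁ * c1 y₂ ≠ 0 from hΔ)]
          ring
      calc ((c1 y, c2 y) : ℝ × ℝ)
          = ((c1 y * q'.2 - c2 y * q'.1)/Δ) • q + ((q.1 * c2 y - q.2 * c1 y)/Δ) • q' := h3.symm
        _ = (s • a' + t • b').1 • q + (s • a' + t • b').2 • q' := by rw [← hst]
        _ = s • a + t • b := by
            rw [ha, hb]
            ext <;> simp <;> ring
    rw [Prod.ext_iff] at hc_eq
    obtain ⟨hcc1, hcc2⟩ := hc_eq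
    simp only [Prod.fst_add, Prod.snd_add, Prod.smul_fst, Prod.smul_snd, smul_eq_mul] at hcc1 hcc2
    have hval : b.2 / D * c1 y + -b.1 / D * c2 y = s := by
      rw [hcc1, hcc2]
      field_simp
      ring
    rw [hval]
    exact_mod_cast hs
  · -- τ₂ PSD (same, giving t)
    apply posSemidef_of_form
    intro y
    rw [hCcombo]
    obtain ⟨s, t, hs, ht, hst⟩ := hcover'
      (((c1 y * q'.2 - c2 y * q'.1)/Δ, (q.1 * c2 y - q.2 * c1 y)/Δ) : ℝ × ℝ)
      (by
        simp only [hK', Set.mem_setOf_eq, hL]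
        have : ((((c1 y * q'.2 - c2 y * q'.1)/Δ) * q.1 + ((q.1 * c2 y - q.2 * c1 y)/Δ) * q'.1,
            ((c1 y * q'.2 - c2 y * q'.1)/Δ) * q.2 + ((q.1 * c2 y - q.2 * c1 y)/Δ) * q'.2) : ℝ × ℝ)
            = ((c1 y, c2 y) : ℝ × ℝ) := by
          ext
          · simp only [hq, hq', hΔdef]
            rw [div_mul_eq_mul_div, div_mul_eq_mul_div, ← add_div, div_eq_iff (show c1 y₁ * c2 y₂ - c2 y₁ * c1 y₂ ≠ 0 from hΔ)]
            ring
          · simp only [hq, hq', hΔdef]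
            rw [div_mul_eq_mul_div, div_mul_eq_mul_div, ← add_div, div_eq_iff (show c1 y₁ * c2 y₂ - c2 y₁ * c1 y₂ ≠ 0 from hΔ)]
            ring
        rw [this]
        exact hcyK y)
    have hc_eq : ((c1 y, c2 y) : ℝ × ℝ) = s • a + t • b := by
      have h3 : ((c1 y * q'.2 - c2 y * q'.1)/Δ) • q + ((q.1 * c2 y - q.2 * c1 y)/Δ) • q'
          = ((c1 y, c2 y) : ℝ × ℝ) := by
        ext
        · simp only [Prod.fst_add, Prod.smul_fst, smul_eq_mul, hq, hq', hΔdef]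
          rw [div_mul_eq_mul_div, div_mul_eq_mul_div, ← add_div, div_eq_iff (show c1 y₁ * c2 y₂ - c2 y₁ * c1 y₂ ≠ 0 from hΔ)]
          ring
        · simp only [Prod.snd_add, Prod.smul_snd, smul_eq_mul, hq, hq', hΔdef]
          rw [div_mul_eq_mul_div, div_mul_eq_mul_div, ← add_div, div_eq_iff (show c1 y₁ * c2 y₂ - c2 y₁ * c1 y₂ ≠ 0 from hΔ)]
          ring
      calc ((c1 y, c2 y) : ℝ × ℝ)
          = ((c1 y * q'.2 - c2 y * q'.1)/Δ) • q + ((q.1 * c2 y - q.2 * c1 y)/Δ) • q' := h3.symm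
        _ = (s • a' + t • b').1 • q + (s • a' + t • b').2 • q' := by rw [← hst]
        _ = s • a + t • b := by
            rw [ha, hb]
            ext <;> simp <;> ring
    rw [Prod.ext_iff] at hc_eq
    obtain ⟨hcc1, hcc2⟩ := hc_eq
    simp only [Prod.fst_add, Prod.snd_add, Prod.smul_fst, Prod.smul_snd, smul_eq_mul] at hcc1 hcc2
    have hval : -a.2 / D * c1 y + a.1 / D * c2 y = t := by
      rw [hcc1, hcc2]
      field_simp
      ring
    rw [hval]
    exact_mod_cast ht
  · -- the decomposition identity
    have hDC : ((D : ℝ) : ℂ) ≠ 0 := by exact_mod_cast hDne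
    have hDc : ((D : ℝ) : ℂ) = (a.1 : ℂ) * (b.2 : ℂ) - (a.2 : ℂ) * (b.1 : ℂ) := by
      rw [hD]; push_cast; ring
    have e1 : (a.1:ℂ) * ((b.2/D : ℝ):ℂ) + (b.1:ℂ) * ((-a.2/D : ℝ):ℂ) = 1 := by
      have hrw : (a.1:ℂ) * ((b.2/D : ℝ):ℂ) + (b.1:ℂ) * ((-a.2/D : ℝ):ℂ)
          = ((a.1:ℂ) * (b.2:ℂ) - (a.2:ℂ) * (b.1:ℂ)) / ((D:ℝ):ℂ) := by
        push_cast
        ring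
      rw [hrw, ← hDc, div_self hDC]
    have e2 : (a.1:ℂ) * ((-b.1/D : ℝ):ℂ) + (b.1:ℂ) * ((a.1/D : ℝ):ℂ) = 0 := by
      push_cast
      field_simp
      ring
    have e3 : (a.2:ℂ) * ((b.2/D : ℝ):ℂ) + (b.2:ℂ) * ((-a.2/D : ℝ):ℂ) = 0 := by
      push_cast
      field_simp
      ring
    have e4 : (a.2:ℂ) * ((-b.1/D : ℝ):ℂ) + (b.2:ℂ) * ((a.1/D : ℝ):ℂ) = 1 := by
      have hrw : (a.2:ℂ) * ((-b.1/D : ℝ):ℂ) + (b.2:ℂ) * ((a.1/D : ℝ):ℂ)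
          = ((a.1:ℂ) * (b.2:ℂ) - (a.2:ℂ) * (b.1:ℂ)) / ((D:ℝ):ℂ) := by
        push_cast
        ring
      rw [hrw, ← hDc, div_self hDC]
    have key : ((a.1 : ℂ) • H₁ + (a.2 : ℂ) • H₂) ⊗ₖ (((b.2 / D : ℝ) : ℂ) • C₁ + ((-b.1 / D : ℝ) : ℂ) • C₂)
        + ((b.1 : ℂ) • H₁ + (b.2 : ℂ) • H₂) ⊗ₖ (((-a.2 / D : ℝ) : ℂ) • C₁ + ((a.1 / D : ℝ) : ℂ) • C₂)
        = ((a.1:ℂ) * ((b.2/D : ℝ):ℂ) + (b.1:ℂ) * ((-a.2/D : ℝ):ℂ)) • (H₁ ⊗ₖ C₁)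
        + ((a.1:ℂ) * ((-b.1/D : ℝ):ℂ) + (b.1:ℂ) * ((a.1/D : ℝ):ℂ)) • (H₁ ⊗ₖ C₂)
        + ((a.2:ℂ) * ((b.2/D : ℝ):ℂ) + (b.2:ℂ) * ((-a.2/D : ℝ):ℂ)) • (H₂ ⊗ₖ C₁)
        + ((a.2:ℂ) * ((-b.1/D : ℝ):ℂ) + (b.2:ℂ) * ((a.1/D : ℝ):ℂ)) • (H₂ ⊗ₖ C₂) := by
      simp only [add_kronecker, kronecker_add, smul_kronecker, kronecker_smul]
      module
    rw [key, e1, e2, e3, e4]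
    simp only [one_smul, zero_smul, add_zero, zero_add]
end Herm
section Reduce
variable {m n : Type*} [Fintype m] [Fintype n] [DecidableEq m] [DecidableEq n]

lemma ind_transfer {M : Type*} [AddCommGroup M] [Module ℂ M]
    (A₁ A₂ H₁ H₂ : M) (α β γ δ : ℂ)
    (h1 : A₁ = α • H₁ + β • H₂) (h2 : A₂ = γ • H₁ + δ • H₂)
    (hA : ∀ u v : ℂ, u • A₁ + v • A₂ = 0 → u = 0 ∧ v = 0) :
    ∀ u v : ℂ, u • H₁ + v • H₂ = 0 → u = 0 ∧ v = 0 := by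
  have hA₁ne : A₁ ≠ 0 := by
    intro h
    have := (hA 1 0 (by simp [h])).1
    simp at this
  intro u v huv
  by_cases hu : u = 0
  · subst hu
    simp only [zero_smul, zero_add] at huv
    rcases smul_eq_zero.mp huv with h|h
    · exact ⟨rfl, h⟩
    · exfalso
      rw [h] at h1 h2
      simp only [smul_zero, add_zero] at h1 h2
      have h3 : γ • A₁ + (-α) • A₂ = 0 := by rw [h1, h2]; module
      obtain ⟨hγ, hα⟩ := hA _ _ h3
      rw [hγ] at h2
      rw [neg_eq_zero] at hα
      rw [hα] at h1
      simp at h1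
      exact hA₁ne h1
  · exfalso
    have hH1 : H₁ = (-(v) * u⁻¹) • H₂ := by
      have h3 : u • H₁ = -(v • H₂) := by
        rw [← add_eq_zero_iff_eq_neg]
        exact huv
      calc H₁ = u⁻¹ • (u • H₁) := by rw [smul_smul, inv_mul_cancel₀ hu, one_smul]
        _ = u⁻¹ • (-(v • H₂)) := by rw [h3]
        _ = (-(v) * u⁻¹) • H₂ := by module
    set k₁ := α * (-(v) * u⁻¹) + β with hk₁
    set k₂ := γ * (-(v) * u⁻¹) + δ with hk₂
    have hA1 : A₁ = k₁ • H₂ := by rw [h1, hH1, hk₁]; module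
    have hA2 : A₂ = k₂ • H₂ := by rw [h2, hH1, hk₂]; module
    have h4 : k₂ • A₁ + (-k₁) • A₂ = 0 := by rw [hA1, hA2]; module
    obtain ⟨h5, h6⟩ := hA _ _ h4
    rw [h5] at hA2
    rw [neg_eq_zero] at h6
    rw [h6] at hA1
    simp at hA1
    exact hA₁ne hA1

lemma det_ne_transfer {M : Type*} [AddCommGroup M] [Module ℂ M]
    (A₁ A₂ H₁ H₂ : M) (α β γ δ : ℂ)
    (h1 : A₁ = α • H₁ + β • H₂) (h2 : A₂ = γ • H₁ + δ • H₂)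
    (hA : ∀ u v : ℂ, u • A₁ + v • A₂ = 0 → u = 0 ∧ v = 0) :
    α * δ - β * γ ≠ 0 := by
  intro hdet
  have hA₁ne : A₁ ≠ 0 := by
    intro h
    have := (hA 1 0 (by simp [h])).1
    simp at this
  have h3 : δ • A₁ + (-β) • A₂ = 0 := by
    rw [h1, h2]
    match_scalars
    · linear_combination hdet
    · ring
  obtain ⟨hδ, hβ⟩ := hA _ _ h3
  rw [neg_eq_zero] at hβ
  have h4 : γ • A₁ + (-α) • A₂ = 0 := by
    rw [h1, h2, hβ, hδ]
    match_scalars <;> ring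
  obtain ⟨hγ, hα⟩ := hA _ _ h4
  rw [neg_eq_zero] at hα
  rw [hα, hβ] at h1
  simp at h1
  exact hA₁ne h1

lemma kron_eq_zero_of_ind (H₁ H₂ : Matrix m m ℂ) (D₁ D₂ : Matrix n n ℂ)
    (hHind : ∀ u v : ℂ, u • H₁ + v • H₂ = 0 → u = 0 ∧ v = 0)
    (h : H₁ ⊗ₖ D₁ + H₂ ⊗ₖ D₂ = 0) : D₁ = 0 ∧ D₂ = 0 := by
  have key : ∀ k l, D₁ k l = 0 ∧ D₂ k l = 0 := by
    intro k l
    have hm : (D₁ k l) • H₁ + (D₂ k l) • H₂ = 0 := by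
      ext i j
      have := congrFun (congrFun h (i, k)) (j, l)
      simp only [Matrix.add_apply, kroneckerMap_apply, Matrix.zero_apply] at this
      simp only [Matrix.add_apply, Matrix.smul_apply, smul_eq_mul, Matrix.zero_apply]
      linear_combination this
    exact hHind _ _ hm
  constructor
  · ext k l; exact (key k l).1
  · ext k l; exact (key k l).2

lemma herm_basis (A₁ A₂ : Matrix m m ℂ) (p q r s : ℂ)
    (hA : ∀ u v : ℂ, u • A₁ + v • A₂ = 0 → u = 0 ∧ v = 0)
    (h1 : A₁ᴴ = p • A₁ + q • A₂) (h2 : A₂ᴴ = r • A₁ + s • A₂) :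
    ∃ (H₁ H₂ : Matrix m m ℂ) (α β γ δ : ℂ), H₁.IsHermitian ∧ H₂.IsHermitian ∧
      A₁ = α • H₁ + β • H₂ ∧ A₂ = γ • H₁ + δ • H₂ := by
  have hA₁ne : A₁ ≠ 0 := by
    intro h
    have := (hA 1 0 (by simp [h])).1
    simp at this
  have hA₂ne : A₂ ≠ 0 := by
    intro h
    have := (hA 0 1 (by simp [h])).2
    simp at this
  have hI1 : (Complex.I / 2) * Complex.I = -(1/2 : ℂ) := by
    linear_combination (1/2 : ℂ) * Complex.I_mul_I
  have hI2 : (-(Complex.I) / 2) * Complex.I = (1/2 : ℂ) := by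
    linear_combination (-(1:ℂ)/2) * Complex.I_mul_I
  by_cases hq : q ≠ 0
  · set H₁ : Matrix m m ℂ := A₁ + A₁ᴴ with hH₁
    set H₂ : Matrix m m ℂ := Complex.I • (A₁ - A₁ᴴ) with hH₂
    have hherm1 : H₁.IsHermitian := by
      unfold Matrix.IsHermitian
      rw [hH₁, conjTranspose_add, conjTranspose_conjTranspose, add_comm]
    have hherm2 : H₂.IsHermitian := by
      unfold Matrix.IsHermitian
      rw [hH₂, conjTranspose_smul, conjTranspose_sub, conjTranspose_conjTranspose]
      rw [Complex.star_def, Complex.conj_I]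
      module
    have hA1 : A₁ = (1/2 : ℂ) • H₁ + (-(Complex.I)/2) • H₂ := by
      calc A₁ = (1/2 : ℂ) • (A₁ + A₁ᴴ) + (1/2 : ℂ) • (A₁ - A₁ᴴ) := by module
        _ = (1/2 : ℂ) • H₁ + ((-(Complex.I)/2) * Complex.I) • (A₁ - A₁ᴴ) := by rw [hI2, hH₁]
        _ = (1/2 : ℂ) • H₁ + (-(Complex.I)/2) • H₂ := by rw [hH₂, smul_smul]
    have hA1H : A₁ᴴ = (1/2 : ℂ) • H₁ + (Complex.I/2) • H₂ := by
      calc A₁ᴴ = (1/2 : ℂ) • (A₁ + A₁ᴴ) + (-(1/2) : ℂ) • (A₁ - A₁ᴴ) := by module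
        _ = (1/2 : ℂ) • H₁ + ((Complex.I/2) * Complex.I) • (A₁ - A₁ᴴ) := by rw [hI1, hH₁]
        _ = (1/2 : ℂ) • H₁ + (Complex.I/2) • H₂ := by rw [hH₂, smul_smul]
    have hA2e : A₂ = q⁻¹ • (A₁ᴴ - p • A₁) := by
      have hqs : q • A₂ = A₁ᴴ - p • A₁ := by rw [h1]; module
      rw [← hqs, smul_smul, inv_mul_cancel₀ hq, one_smul]
    refine ⟨H₁, H₂, 1/2, -(Complex.I)/2, (1-p)/(2*q), Complex.I*(1+p)/(2*q),
      hherm1, hherm2, hA1, ?_⟩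
    rw [hA2e, hA1H, hA1]
    match_scalars <;> field_simp <;> ring_nf <;> (try simp only [Complex.I_sq]) <;> (try ring_nf)
  push_neg at hq
  by_cases hr : r ≠ 0
  · set H₁ : Matrix m m ℂ := A₂ + A₂ᴴ with hH₁
    set H₂ : Matrix m m ℂ := Complex.I • (A₂ - A₂ᴴ) with hH₂
    have hherm1 : H₁.IsHermitian := by
      unfold Matrix.IsHermitian
      rw [hH₁, conjTranspose_add, conjTranspose_conjTranspose, add_comm]
    have hherm2 : H₂.IsHermitian := by
      unfold Matrix.IsHermitian
      rw [hH₂, conjTranspose_smul, conjTranspose_sub, conjTranspose_conjTranspose]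
      rw [Complex.star_def, Complex.conj_I]
      module
    have hA2 : A₂ = (1/2 : ℂ) • H₁ + (-(Complex.I)/2) • H₂ := by
      calc A₂ = (1/2 : ℂ) • (A₂ + A₂ᴴ) + (1/2 : ℂ) • (A₂ - A₂ᴴ) := by module
        _ = (1/2 : ℂ) • H₁ + ((-(Complex.I)/2) * Complex.I) • (A₂ - A₂ᴴ) := by rw [hI2, hH₁]
        _ = (1/2 : ℂ) • H₁ + (-(Complex.I)/2) • H₂ := by rw [hH₂, smul_smul]
    have hA2H : A₂ᴴ = (1/2 : ℂ) • H₁ + (Complex.I/2) • H₂ := by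
      calc A₂ᴴ = (1/2 : ℂ) • (A₂ + A₂ᴴ) + (-(1/2) : ℂ) • (A₂ - A₂ᴴ) := by module
        _ = (1/2 : ℂ) • H₁ + ((Complex.I/2) * Complex.I) • (A₂ - A₂ᴴ) := by rw [hI1, hH₁]
        _ = (1/2 : ℂ) • H₁ + (Complex.I/2) • H₂ := by rw [hH₂, smul_smul]
    have hA1e : A₁ = r⁻¹ • (A₂ᴴ - s • A₂) := by
      have hrs : r • A₁ = A₂ᴴ - s • A₂ := by rw [h2]; module
      rw [← hrs, smul_smul, inv_mul_cancel₀ hr, one_smul]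
    refine ⟨H₁, H₂, (1-s)/(2*r), Complex.I*(1+s)/(2*r), 1/2, -(Complex.I)/2,
      hherm1, hherm2, ?_, hA2⟩
    rw [hA1e, hA2H, hA2]
    match_scalars <;> field_simp <;> ring_nf <;> (try simp only [Complex.I_sq]) <;> (try ring_nf)
  push_neg at hr
  -- q = 0, r = 0
  rw [hq, zero_smul, add_zero] at h1
  rw [hr, zero_smul, zero_add] at h2
  have hpne : p ≠ 0 := by
    intro h0
    rw [h0, zero_smul] at h1
    exact hA₁ne (by simpa using congrArg conjTranspose h1)
  have hsne : s ≠ 0 := by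
    intro h0
    rw [h0, zero_smul] at h2
    exact hA₂ne (by simpa using congrArg conjTranspose h2)
  have hpu : (starRingEnd ℂ) p * p = 1 := by
    have hAA : A₁ = ((starRingEnd ℂ) p * p) • A₁ := by
      conv_lhs => rw [← conjTranspose_conjTranspose A₁]
      rw [h1, conjTranspose_smul, h1, smul_smul]
      rfl
    have h3 : ((starRingEnd ℂ) p * p - 1) • A₁ + (0:ℂ) • A₂ = 0 := by
      rw [sub_smul]
      rw [← hAA]
      simp
    have := (hA _ _ h3).1
    linear_combination this
  have hsu : (starRingEnd ℂ) s * s = 1 := by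
    have hAA : A₂ = ((starRingEnd ℂ) s * s) • A₂ := by
      conv_lhs => rw [← conjTranspose_conjTranspose A₂]
      rw [h2, conjTranspose_smul, h2, smul_smul]
      rfl
    have h3 : (0:ℂ) • A₁ + ((starRingEnd ℂ) s * s - 1) • A₂ = 0 := by
      rw [sub_smul, ← hAA]
      simp
    have := (hA _ _ h3).2
    linear_combination this
  obtain ⟨z, hz⟩ := IsAlgClosed.exists_pow_nat_eq p (n := 2) (by norm_num)
  obtain ⟨w, hw⟩ := IsAlgClosed.exists_pow_nat_eq s (n := 2) (by norm_num)
  have hzne : z ≠ 0 := by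
    intro h0
    rw [h0] at hz
    simp at hz
    exact hpne hz.symm
  have hwne : w ≠ 0 := by
    intro h0
    rw [h0] at hw
    simp at hw
    exact hsne hw.symm
  have hzu : (starRingEnd ℂ) z * z = 1 := by
    have h4 : ((starRingEnd ℂ) z * z) ^ 2 = 1 := by
      have : ((starRingEnd ℂ) z * z) ^ 2 = (starRingEnd ℂ) (z^2) * z^2 := by
        rw [map_pow]; ring
      rw [this, hz, hpu]
    have h5 : (0:ℝ) ≤ ((starRingEnd ℂ) z * z).re ∧ ((starRingEnd ℂ) z * z).im = 0 := by
      constructor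
      · rw [Complex.mul_re]
        simp [Complex.conj_re, Complex.conj_im]
        nlinarith [Complex.sq_norm z]
      · rw [Complex.mul_im]
        simp [Complex.conj_re, Complex.conj_im]
        ring
    set t := (starRingEnd ℂ) z * z with ht
    have h6 : t = ((t.re : ℝ) : ℂ) := Complex.ext rfl (by simp [h5.2])
    rw [h6] at h4 ⊢
    norm_cast at h4 ⊢
    nlinarith [h5.1, sq_nonneg (t.re - 1), sq_nonneg (t.re + 1)]
  have hwu : (starRingEnd ℂ) w * w = 1 := by
    have h4 : ((starRingEnd ℂ) w * w) ^ 2 = 1 := by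
      have : ((starRingEnd ℂ) w * w) ^ 2 = (starRingEnd ℂ) (w^2) * w^2 := by
        rw [map_pow]; ring
      rw [this, hw, hsu]
    have h5 : (0:ℝ) ≤ ((starRingEnd ℂ) w * w).re ∧ ((starRingEnd ℂ) w * w).im = 0 := by
      constructor
      · rw [Complex.mul_re]
        simp [Complex.conj_re, Complex.conj_im]
        nlinarith [Complex.sq_norm w]
      · rw [Complex.mul_im]
        simp [Complex.conj_re, Complex.conj_im]
        ring
    set t := (starRingEnd ℂ) w * w with ht
    have h6 : t = ((t.re : ℝ) : ℂ) := Complex.ext rfl (by simp [h5.2])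
    rw [h6] at h4 ⊢
    norm_cast at h4 ⊢
    nlinarith [h5.1, sq_nonneg (t.re - 1), sq_nonneg (t.re + 1)]
  refine ⟨z • A₁, w • A₂, z⁻¹, 0, 0, w⁻¹, ?_, ?_, ?_, ?_⟩
  · unfold Matrix.IsHermitian
    rw [conjTranspose_smul, h1, smul_smul, Complex.star_def]
    have : (starRingEnd ℂ) z * p = z := by
      rw [← hz]
      have : (starRingEnd ℂ) z * z ^ 2 = ((starRingEnd ℂ) z * z) * z := by ring
      rw [this, hzu, one_mul]
    rw [this]
  · unfold Matrix.IsHermitian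
    rw [conjTranspose_smul, h2, smul_smul, Complex.star_def]
    have : (starRingEnd ℂ) w * s = w := by
      rw [← hw]
      have : (starRingEnd ℂ) w * w ^ 2 = ((starRingEnd ℂ) w * w) * w := by ring
      rw [this, hwu, one_mul]
    rw [this]
  · simp [smul_smul, inv_mul_cancel₀ hzne]
  · simp [smul_smul, inv_mul_cancel₀ hwne]
end Reduce
section Main
variable {m n : Type*} [Fintype m] [Fintype n] [DecidableEq m] [DecidableEq n]

lemma kron_sub_right (A : Matrix m m ℂ) (B C : Matrix n n ℂ) :
    A ⊗ₖ (B - C) = A ⊗ₖ B - A ⊗ₖ C := by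
  ext ij kl
  simp [kroneckerMap_apply, mul_sub]

lemma reduce_A (A₁ A₂ : Matrix m m ℂ) (B₁ B₂ : Matrix n n ℂ)
    (u v : ℂ) (huv : ¬(u = 0 ∧ v = 0)) (h : u • A₁ + v • A₂ = 0) :
    ∃ (A : Matrix m m ℂ) (B : Matrix n n ℂ), A₁ ⊗ₖ B₁ + A₂ ⊗ₖ B₂ = A ⊗ₖ B := by
  by_cases hu : u = 0
  · have hv : v ≠ 0 := by tauto
    have hA₂ : A₂ = 0 := by
      rw [hu, zero_smul, zero_add] at h
      exact (smul_eq_zero.mp h).resolve_left hv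
    exact ⟨A₁, B₁, by simp [hA₂]⟩
  · have hA₁ : A₁ = (-v/u) • A₂ := by
      have h3 : u • A₁ = -(v • A₂) := by rw [← add_eq_zero_iff_eq_neg]; exact h
      calc A₁ = u⁻¹ • (u • A₁) := by rw [smul_smul, inv_mul_cancel₀ hu, one_smul]
        _ = u⁻¹ • (-(v • A₂)) := by rw [h3]
        _ = (-v/u) • A₂ := by match_scalars; ring
    refine ⟨A₂, (-v/u) • B₁ + B₂, ?_⟩
    rw [hA₁]
    simp only [smul_kronecker, kronecker_add, kronecker_smul]

lemma reduce_B (A₁ A₂ : Matrix m m ℂ) (B₁ B₂ : Matrix n n ℂ)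
    (u v : ℂ) (huv : ¬(u = 0 ∧ v = 0)) (h : u • B₁ + v • B₂ = 0) :
    ∃ (A : Matrix m m ℂ) (B : Matrix n n ℂ), A₁ ⊗ₖ B₁ + A₂ ⊗ₖ B₂ = A ⊗ₖ B := by
  by_cases hu : u = 0
  · have hv : v ≠ 0 := by tauto
    have hB₂ : B₂ = 0 := by
      rw [hu, zero_smul, zero_add] at h
      exact (smul_eq_zero.mp h).resolve_left hv
    exact ⟨A₁, B₁, by simp [hB₂]⟩
  · have hB₁ : B₁ = (-v/u) • B₂ := by
      have h3 : u • B₁ = -(v • B₂) := by rw [← add_eq_zero_iff_eq_neg]; exact h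
      calc B₁ = u⁻¹ • (u • B₁) := by rw [smul_smul, inv_mul_cancel₀ hu, one_smul]
        _ = u⁻¹ • (-(v • B₂)) := by rw [h3]
        _ = (-v/u) • B₂ := by match_scalars; ring
    refine ⟨(-v/u) • A₁ + A₂, B₂, ?_⟩
    rw [hB₁]
    simp only [smul_kronecker, add_kronecker, kronecker_smul]

set_option maxHeartbeats 1000000 in
lemma main_general (A₁ A₂ : Matrix m m ℂ) (B₁ B₂ : Matrix n n ℂ)
    (hρ : (A₁ ⊗ₖ B₁ + A₂ ⊗ₖ B₂).PosSemidef) :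
    ∃ (σ₁ σ₂ : Matrix m m ℂ) (τ₁ τ₂ : Matrix n n ℂ),
      σ₁.PosSemidef ∧ σ₂.PosSemidef ∧ τ₁.PosSemidef ∧ τ₂.PosSemidef ∧
      A₁ ⊗ₖ B₁ + A₂ ⊗ₖ B₂ = σ₁ ⊗ₖ τ₁ + σ₂ ⊗ₖ τ₂ := by
  classical
  by_cases hAdep : ∃ u v : ℂ, ¬(u = 0 ∧ v = 0) ∧ u • A₁ + v • A₂ = 0
  · obtain ⟨u, v, huv, h⟩ := hAdep
    obtain ⟨A, B, hAB⟩ := reduce_A A₁ A₂ B₁ B₂ u v huv h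
    rw [hAB] at hρ ⊢
    obtain ⟨σ, τ, hσ, hτ, he⟩ := single_kron A B hρ
    exact ⟨σ, 0, τ, 0, hσ, Matrix.PosSemidef.zero, hτ, Matrix.PosSemidef.zero, by simp [he]⟩
  by_cases hBdep : ∃ u v : ℂ, ¬(u = 0 ∧ v = 0) ∧ u • B₁ + v • B₂ = 0
  · obtain ⟨u, v, huv, h⟩ := hBdep
    obtain ⟨A, B, hAB⟩ := reduce_B A₁ A₂ B₁ B₂ u v huv h
    rw [hAB] at hρ ⊢
    obtain ⟨σ, τ, hσ, hτ, he⟩ := single_kron A B hρ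
    exact ⟨σ, 0, τ, 0, hσ, Matrix.PosSemidef.zero, hτ, Matrix.PosSemidef.zero, by simp [he]⟩
  have hA : ∀ u v : ℂ, u • A₁ + v • A₂ = 0 → u = 0 ∧ v = 0 := by
    intro u v h
    by_contra hc
    exact hAdep ⟨u, v, hc, h⟩
  have hB : ∀ u v : ℂ, u • B₁ + v • B₂ = 0 → u = 0 ∧ v = 0 := by
    intro u v h
    by_contra hc
    exact hBdep ⟨u, v, hc, h⟩
  -- Hermiticity of ρ in Kronecker form
  have hherm : A₁ᴴ ⊗ₖ B₁ᴴ + A₂ᴴ ⊗ₖ B₂ᴴ = A₁ ⊗ₖ B₁ + A₂ ⊗ₖ B₂ := by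
    have h0 := hρ.1
    unfold Matrix.IsHermitian at h0
    rw [conjTranspose_add, kron_conjTranspose', kron_conjTranspose'] at h0
    exact h0
  set c₁ : (n → ℂ) → ℂ := fun y => star y ⬝ᵥ B₁ *ᵥ y with hc₁
  set c₂ : (n → ℂ) → ℂ := fun y => star y ⬝ᵥ B₂ *ᵥ y with hc₂
  have hcombo : ∀ (α β : ℂ) (y : n → ℂ),
      star y ⬝ᵥ (α • B₁ + β • B₂) *ᵥ y = α * c₁ y + β * c₂ y := by
    intro α β y
    rw [add_mulVec, dotProduct_add, form_smul, form_smul]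
  have hpick : ∃ y z, c₁ y * c₂ z - c₂ y * c₁ z ≠ 0 := by
    apply pick_pair
    intro α β hall
    apply hB
    apply form_eq_zero_iff
    intro y
    rw [hcombo]
    exact hall y
  obtain ⟨y₁, y₂, hδ⟩ := hpick
  have E : ∀ y, ((starRingEnd ℂ) (c₁ y)) • A₁ᴴ + ((starRingEnd ℂ) (c₂ y)) • A₂ᴴ
      = (c₁ y) • A₁ + (c₂ y) • A₂ := by
    intro y
    have h0 := congrArg (fun ρ => contr ρ y) hherm
    simp only [contr_add, contr_kron] at h0
    rw [form_conjTranspose, form_conjTranspose] at h0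
    exact h0
  set c11 := c₁ y₁ with hc11
  set c21 := c₂ y₁ with hc21
  set c12 := c₁ y₂ with hc12
  set c22 := c₂ y₂ with hc22
  set d : ℂ := (starRingEnd ℂ) c11 * (starRingEnd ℂ) c22
      - (starRingEnd ℂ) c21 * (starRingEnd ℂ) c12 with hddef
  have hd : d ≠ 0 := by
    have heq : d = (starRingEnd ℂ) (c11 * c22 - c21 * c12) := by
      rw [hddef, map_sub, _root_.map_mul, _root_.map_mul]
    rw [heq]
    intro h0
    apply hδ
    have := congrArg (starRingEnd ℂ) h0
    simpa using this
  have hd1 : d • A₁ᴴ = ((starRingEnd ℂ) c22 * c11 - (starRingEnd ℂ) c21 * c12) • A₁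
      + ((starRingEnd ℂ) c22 * c21 - (starRingEnd ℂ) c21 * c22) • A₂ := by
    calc d • A₁ᴴ
        = (starRingEnd ℂ) c22 • (((starRingEnd ℂ) c11) • A₁ᴴ + ((starRingEnd ℂ) c21) • A₂ᴴ)
          - (starRingEnd ℂ) c21 • (((starRingEnd ℂ) c12) • A₁ᴴ + ((starRingEnd ℂ) c22) • A₂ᴴ) := by
          rw [hddef]; module
      _ = (starRingEnd ℂ) c22 • (c11 • A₁ + c21 • A₂)
          - (starRingEnd ℂ) c21 • (c12 • A₁ + c22 • A₂) := by rw [E y₁, E y₂]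
      _ = _ := by module
  have hd2 : d • A₂ᴴ = ((starRingEnd ℂ) c11 * c12 - (starRingEnd ℂ) c12 * c11) • A₁
      + ((starRingEnd ℂ) c11 * c22 - (starRingEnd ℂ) c12 * c21) • A₂ := by
    calc d • A₂ᴴ
        = (starRingEnd ℂ) c11 • (((starRingEnd ℂ) c12) • A₁ᴴ + ((starRingEnd ℂ) c22) • A₂ᴴ)
          - (starRingEnd ℂ) c12 • (((starRingEnd ℂ) c11) • A₁ᴴ + ((starRingEnd ℂ) c21) • A₂ᴴ) := by
          rw [hddef]; module
      _ = (starRingEnd ℂ) c11 • (c12 • A₁ + c22 • A₂)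
          - (starRingEnd ℂ) c12 • (c11 • A₁ + c21 • A₂) := by rw [E y₁, E y₂]
      _ = _ := by module
  have hst1 : A₁ᴴ = (((starRingEnd ℂ) c22 * c11 - (starRingEnd ℂ) c21 * c12)/d) • A₁
      + (((starRingEnd ℂ) c22 * c21 - (starRingEnd ℂ) c21 * c22)/d) • A₂ := by
    calc A₁ᴴ = d⁻¹ • (d • A₁ᴴ) := by rw [smul_smul, inv_mul_cancel₀ hd, one_smul]
      _ = d⁻¹ • (((starRingEnd ℂ) c22 * c11 - (starRingEnd ℂ) c21 * c12) • A₁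
          + ((starRingEnd ℂ) c22 * c21 - (starRingEnd ℂ) c21 * c22) • A₂) := by rw [hd1]
      _ = _ := by match_scalars <;> field_simp
  have hst2 : A₂ᴴ = (((starRingEnd ℂ) c11 * c12 - (starRingEnd ℂ) c12 * c11)/d) • A₁
      + (((starRingEnd ℂ) c11 * c22 - (starRingEnd ℂ) c12 * c21)/d) • A₂ := by
    calc A₂ᴴ = d⁻¹ • (d • A₂ᴴ) := by rw [smul_smul, inv_mul_cancel₀ hd, one_smul]
      _ = d⁻¹ • (((starRingEnd ℂ) c11 * c12 - (starRingEnd ℂ) c12 * c11) • A₁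
          + ((starRingEnd ℂ) c11 * c22 - (starRingEnd ℂ) c12 * c21) • A₂) := by rw [hd2]
      _ = _ := by match_scalars <;> field_simp
  obtain ⟨H₁, H₂, α, β, γ, δ', hherm1, hherm2, hA1, hA2⟩ :=
    herm_basis A₁ A₂ _ _ _ _ hA hst1 hst2
  have hHind := ind_transfer A₁ A₂ H₁ H₂ α β γ δ' hA1 hA2 hA
  have hdetne := det_ne_transfer A₁ A₂ H₁ H₂ α β γ δ' hA1 hA2 hA
  set C₁' : Matrix n n ℂ := α • B₁ + γ • B₂ with hC₁'
  set C₂' : Matrix n n ℂ := β • B₁ + δ' • B₂ with hC₂'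
  have hrw : A₁ ⊗ₖ B₁ + A₂ ⊗ₖ B₂ = H₁ ⊗ₖ C₁' + H₂ ⊗ₖ C₂' := by
    rw [hA1, hA2, hC₁', hC₂']
    simp only [add_kronecker, smul_kronecker, kronecker_add, kronecker_smul]
    module
  have hCind : ∀ u v : ℂ, u • C₁' + v • C₂' = 0 → u = 0 ∧ v = 0 := by
    intro u v h
    have hexp : (u * α + v * β) • B₁ + (u * γ + v * δ') • B₂ = 0 := by
      rw [← h, hC₁', hC₂']
      module
    obtain ⟨e1, e2⟩ := hB _ _ hexp
    constructor
    · have : u * (α * δ' - β * γ) = δ' * (u * α + v * β) - β * (u * γ + v * δ') := by ring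
      rw [e1, e2] at this
      simp only [mul_zero, sub_zero] at this
      rcases mul_eq_zero.mp this with h'|h'
      · exact h'
      · exact absurd h' hdetne
    · have : v * (α * δ' - β * γ) = α * (u * γ + v * δ') - γ * (u * α + v * β) := by ring
      rw [e1, e2] at this
      simp only [mul_zero, sub_zero] at this
      rcases mul_eq_zero.mp this with h'|h'
      · exact h'
      · exact absurd h' hdetne
  -- Hermiticity of C₁' and C₂'
  have hCherm : C₁'ᴴ = C₁' ∧ C₂'ᴴ = C₂' := by
    have hzero : H₁ ⊗ₖ (C₁'ᴴ - C₁') + H₂ ⊗ₖ (C₂'ᴴ - C₂') = 0 := by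
      have h0 : (H₁ ⊗ₖ C₁' + H₂ ⊗ₖ C₂')ᴴ = H₁ ⊗ₖ C₁'ᴴ + H₂ ⊗ₖ C₂'ᴴ := by
        rw [conjTranspose_add, kron_conjTranspose', kron_conjTranspose', hherm1, hherm2]
      have h1 : H₁ ⊗ₖ C₁'ᴴ + H₂ ⊗ₖ C₂'ᴴ = H₁ ⊗ₖ C₁' + H₂ ⊗ₖ C₂' := by
        rw [← h0, ← hrw]
        have h2 := hρ.1
        unfold Matrix.IsHermitian at h2
        rw [hrw] at h2 ⊢
        exact h2
      rw [kron_sub_right, kron_sub_right]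
      rw [sub_add_sub_comm, h1]
      simp
    obtain ⟨hz1, hz2⟩ := kron_eq_zero_of_ind H₁ H₂ _ _ hHind hzero
    exact ⟨sub_eq_zero.mp hz1, sub_eq_zero.mp hz2⟩
  have hPSD' : (H₁ ⊗ₖ C₁' + H₂ ⊗ₖ C₂').PosSemidef := by
    rw [← hrw]
    exact hρ
  obtain ⟨σ₁, σ₂, τ₁, τ₂, h1, h2, h3, h4, he⟩ :=
    herm_case H₁ H₂ C₁' C₂' hherm1 hherm2 hCherm.1 hCherm.2 hHind hCind hPSD'
  exact ⟨σ₁, σ₂, τ₁, τ₂, h1, h2, h3, h4, by rw [hrw, he]⟩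
end Main

theorem stmt_0 (d1 d2 : ℕ)
    (ρ : Matrix (Fin d1 × Fin d2) (Fin d1 × Fin d2) ℂ)
    (A₁ A₂ : Matrix (Fin d1) (Fin d1) ℂ) (B₁ B₂ : Matrix (Fin d2) (Fin d2) ℂ)
    (hρ : ρ.PosSemidef) (hdecomp : ρ = A₁ ⊗ₖ B₁ + A₂ ⊗ₖ B₂) :
    ∃ (σ₁ σ₂ : Matrix (Fin d1) (Fin d1) ℂ) (τ₁ τ₂ : Matrix (Fin d2) (Fin d2) ℂ),
      σ₁.PosSemidef ∧ σ₂.PosSemidef ∧ τ₁.PosSemidef ∧ τ₂.PosSemidef ∧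
      ρ = σ₁ ⊗ₖ τ₁ + σ₂ ⊗ₖ τ₂ := by
  subst hdecomp
  exact main_general A₁ A₂ B₁ B₂ hρ
end

section
/- Let P₁, …, P_r ∈ M_s and Q₁, …, Q_r ∈ M_t be two sets of matrices, each linearly independent over ℂ, such that ρ = Σ_{α=1}^r P_α ⊗ Q_α is Hermitian. Then ρ can be written as ρ = Σ_{α=1}^r A_α ⊗ B_α with A_α ∈ Her_s and B_α ∈ Her_t, i.e. with the same number r of terms but Hermitian local factors. -/
open scoped Kronecker ComplexOrder
open Matrix

local notation "𝕔" => starRingEnd ℂ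

/-- Dual family for a linearly independent family of vectors. -/
lemma exists_dual_family {W : Type*} [AddCommGroup W] [Module ℂ W] {r : ℕ} {v : Fin r → W}
    (hv : LinearIndependent ℂ v) :
    ∃ φ : Fin r → (W →ₗ[ℂ] ℂ), ∀ β α, φ β (v α) = if α = β then 1 else 0 := by
  obtain ⟨q, hq⟩ := Submodule.exists_isCompl (Submodule.span ℂ (Set.range v))
  refine ⟨fun β => ((Module.Basis.span hv).coord β).comp
      (Submodule.linearProjOfIsCompl _ q hq), fun β α => ?_⟩
  have hmem : v α ∈ Submodule.span ℂ (Set.range v) := Submodule.subset_span ⟨α, rfl⟩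
  have hb : (⟨v α, hmem⟩ : Submodule.span ℂ (Set.range v)) = Module.Basis.span hv α :=
    (Module.Basis.span_apply hv α).symm
  have h1 : Submodule.linearProjOfIsCompl _ q hq (v α) = Module.Basis.span hv α := by
    rw [← hb]
    exact Submodule.linearProjOfIsCompl_apply_left hq ⟨v α, hmem⟩
  simp [LinearMap.comp_apply, h1, Module.Basis.coord_apply, Module.Basis.repr_self, Finsupp.single_apply]

/-- There is a unit complex number avoiding any finite set. -/
lemma exists_unit_avoiding (Z : Set ℂ) (hZ : Z.Finite) :
    ∃ w : ℂ, ‖w‖ = 1 ∧ w ∉ Z := by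
  have hne : ∀ x : ℝ, (1 - (x : ℂ) * Complex.I) ≠ 0 := by
    intro x h
    have := congrArg Complex.re h
    simp at this
  have hinf : ({w : ℂ | ‖w‖ = 1}).Infinite := by
    apply Set.infinite_of_injective_forall_mem
      (f := fun x : ℝ => (1 + (x : ℂ) * Complex.I) / (1 - (x : ℂ) * Complex.I))
    · intro a b hab
      simp only at hab
      rw [div_eq_div_iff (hne a) (hne b)] at hab
      have h2 : (a : ℂ) = b := by
        linear_combination (-Complex.I / 2) * hab + ((a : ℂ) - (b : ℂ)) * Complex.I_sq
      exact_mod_cast h2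
    · intro x
      have hc : (starRingEnd ℂ) (1 + (x : ℂ) * Complex.I) = 1 - (x : ℂ) * Complex.I := by
        simp [map_add, _root_.map_mul, Complex.conj_I]
        ring
      simp only [Set.mem_setOf_eq, norm_div]
      rw [← hc, RCLike.norm_conj, div_self]
      exact norm_ne_zero_iff.mpr fun h => hne x (by rw [← hc, h, map_zero])
  obtain ⟨w, hw⟩ := (hinf.diff hZ).nonempty
  exact ⟨w, hw.1, hw.2⟩

theorem stmt_1 (s t r : ℕ)
    (P : Fin r → Matrix (Fin s) (Fin s) ℂ) (Q : Fin r → Matrix (Fin t) (Fin t) ℂ)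
    (hP : LinearIndependent ℂ P) (hQ : LinearIndependent ℂ Q)
    (hherm : (∑ α, P α ⊗ₖ Q α).IsHermitian) :
    ∃ (A : Fin r → Matrix (Fin s) (Fin s) ℂ) (B : Fin r → Matrix (Fin t) (Fin t) ℂ),
      (∀ α, (A α).IsHermitian) ∧ (∀ α, (B α).IsHermitian) ∧
      ∑ α, P α ⊗ₖ Q α = ∑ α, A α ⊗ₖ B α := by
  classical
  obtain ⟨φ, hφ⟩ := exists_dual_family hQ
  -- entrywise consequence of hermitianity
  have hconj : ∀ i j k l, (∑ α, P α i j * Q α k l) = ∑ α, 𝕔 (P α j i) * 𝕔 (Q α l k) := by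
    intro i j k l
    have h2 := congrFun (congrFun hherm.eq (i, k)) (j, l)
    simpa [Matrix.conjTranspose_apply, Matrix.sum_apply, Matrix.kroneckerMap_apply,
      map_sum, _root_.map_mul] using h2.symm
  have hMeq : ∀ i j, (∑ α, P α i j • Q α) = ∑ α, 𝕔 (P α j i) • (Q α)ᴴ := by
    intro i j
    ext k l
    simpa [Matrix.sum_apply, Matrix.smul_apply, smul_eq_mul,
      Matrix.conjTranspose_apply] using hconj i j k l
  set C : Matrix (Fin r) (Fin r) ℂ := Matrix.of (fun α β => φ β ((Q α)ᴴ)) with hCdef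
  have hE1 : ∀ β i j, P β i j = ∑ α, C α β * 𝕔 (P α j i) := by
    intro β i j
    have h := congrArg (φ β) (hMeq i j)
    simp only [map_sum, _root_.map_smul, smul_eq_mul, hφ, mul_ite, mul_one, mul_zero,
      Finset.sum_ite_eq', Finset.mem_univ, if_true] at h
    rw [h]
    refine Finset.sum_congr rfl fun α _ => ?_
    rw [hCdef]
    simp [Matrix.of_apply, mul_comm]
  have hE2 : ∀ β i j, 𝕔 (P β j i) = ∑ α, 𝕔 (C α β) * P α i j := by
    intro β i j
    have h := congrArg 𝕔 (hE1 β j i)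
    simpa [map_sum, _root_.map_mul, Complex.conj_conj] using h
  have hPrw : ∀ β i j, P β i j = ∑ γ, (∑ α, 𝕔 (C γ α) * C α β) * P γ i j := by
    intro β i j
    calc P β i j = ∑ α, C α β * 𝕔 (P α j i) := hE1 β i j
    _ = ∑ α, C α β * ∑ γ, 𝕔 (C γ α) * P γ i j := by
        refine Finset.sum_congr rfl fun α _ => ?_
        rw [hE2 α i j]
    _ = ∑ α, ∑ γ, C α β * (𝕔 (C γ α) * P γ i j) := by
        refine Finset.sum_congr rfl fun α _ => Finset.mul_sum _ _ _
    _ = ∑ γ, ∑ α, C α β * (𝕔 (C γ α) * P γ i j) := Finset.sum_comm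
    _ = ∑ γ, (∑ α, 𝕔 (C γ α) * C α β) * P γ i j := by
        refine Finset.sum_congr rfl fun γ _ => ?_
        rw [Finset.sum_mul]
        exact Finset.sum_congr rfl fun α _ => by ring
  have hCcC : C.map 𝕔 * C = 1 := by
    ext γ β
    have h0 : ∑ γ', ((∑ α, 𝕔 (C γ' α) * C α β) - (if γ' = β then 1 else 0)) • P γ' = 0 := by
      ext i j
      simp only [Matrix.sum_apply, Matrix.smul_apply, smul_eq_mul, sub_mul, ite_mul, one_mul,
        zero_mul, Finset.sum_sub_distrib, Finset.sum_ite_eq', Finset.mem_univ, if_true,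
        Matrix.zero_apply]
      rw [← hPrw β i j, sub_self]
    have h1 := Fintype.linearIndependent_iff.mp hP _ h0 γ
    rw [sub_eq_zero] at h1
    simpa [Matrix.mul_apply, Matrix.map_apply, Matrix.one_apply] using h1
  have hCCc : C * C.map 𝕔 = 1 := mul_eq_one_comm.mp hCcC
  have hE3 : ∀ γ k l, Q γ k l = ∑ β, 𝕔 (C γ β) * 𝕔 (Q β l k) := by
    intro γ k l
    have hmat : ∑ α, Q α k l • P α = ∑ α, (∑ β, 𝕔 (C α β) * 𝕔 (Q β l k)) • P α := by
      ext i j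
      simp only [Matrix.sum_apply, Matrix.smul_apply, smul_eq_mul]
      calc ∑ α, Q α k l * P α i j = ∑ α, P α i j * Q α k l := by
            exact Finset.sum_congr rfl fun α _ => mul_comm _ _
      _ = ∑ β, 𝕔 (P β j i) * 𝕔 (Q β l k) := hconj i j k l
      _ = ∑ β, (∑ α, 𝕔 (C α β) * P α i j) * 𝕔 (Q β l k) := by
            refine Finset.sum_congr rfl fun β _ => ?_
            rw [hE2 β i j]
      _ = ∑ β, ∑ α, (𝕔 (C α β) * P α i j) * 𝕔 (Q β l k) := by
            refine Finset.sum_congr rfl fun β _ => Finset.sum_mul _ _ _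
      _ = ∑ α, ∑ β, (𝕔 (C α β) * P α i j) * 𝕔 (Q β l k) := Finset.sum_comm
      _ = ∑ α, (∑ β, 𝕔 (C α β) * 𝕔 (Q β l k)) * P α i j := by
            refine Finset.sum_congr rfl fun α _ => ?_
            rw [Finset.sum_mul]
            exact Finset.sum_congr rfl fun β _ => by ring
    have h0 : ∑ α, (Q α k l - ∑ β, 𝕔 (C α β) * 𝕔 (Q β l k)) • P α = 0 := by
      simp only [sub_smul, Finset.sum_sub_distrib, hmat, sub_self]
    have h1 := Fintype.linearIndependent_iff.mp hP _ h0 γ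
    exact sub_eq_zero.mp h1
  have hE4 : ∀ γ k l, 𝕔 (Q γ l k) = ∑ β, C γ β * Q β k l := by
    intro γ k l
    have h := congrArg 𝕔 (hE3 γ l k)
    simpa [map_sum, _root_.map_mul, Complex.conj_conj] using h
  -- pick a unit w avoiding the spectrum of -C
  obtain ⟨w, hw1, hw2⟩ := exists_unit_avoiding (spectrum ℂ (-C)) (Matrix.finite_spectrum _)
  have hwunit : IsUnit (w • (1 : Matrix (Fin r) (Fin r) ℂ) + C) := by
    have h := spectrum.notMem_iff.mp hw2
    rwa [Algebra.algebraMap_eq_smul_one, sub_neg_eq_add] at h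
  obtain ⟨ν, hν⟩ : ∃ ν : ℂ, ν ^ 2 = w := IsAlgClosed.exists_pow_nat_eq w (by norm_num)
  set μ : ℂ := 𝕔 ν with hμdef
  have hνnorm : Complex.normSq ν = 1 := by
    have h1 : ‖ν‖ ^ 2 = 1 := by
      rw [← norm_pow, hν, hw1]
    have h2 : ‖ν‖ = 1 := by nlinarith [norm_nonneg ν]
    rw [← Complex.sq_norm, h2]
    norm_num
  have hμν : μ * ν = 1 := by
    rw [hμdef, mul_comm, Complex.mul_conj, hνnorm]
    norm_num
  have hμ0 : μ ≠ 0 := left_ne_zero_of_mul_eq_one hμν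
  have hμw : μ * w = ν := by
    rw [← hν, pow_two, ← mul_assoc, hμν, one_mul]
  set S : Matrix (Fin r) (Fin r) ℂ := μ • 1 + ν • C.map 𝕔 with hSdef
  have hCS : C * S = S.map 𝕔 := by
    have h1 : C * S = μ • C + ν • 1 := by
      rw [hSdef, mul_add, Matrix.mul_smul, mul_one, Matrix.mul_smul, hCCc]
    have h2 : S.map 𝕔 = ν • 1 + μ • C := by
      rw [hSdef]
      ext a b
      simp [Matrix.map_apply, Matrix.add_apply, Matrix.smul_apply, smul_eq_mul,
        Matrix.one_apply, apply_ite, Complex.conj_conj, hμdef]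
    rw [h1, h2, add_comm]
  have hSfact : S = (μ • (1 : Matrix (Fin r) (Fin r) ℂ)) * ((w • 1 + C) * C.map 𝕔) := by
    have h1 : (w • (1 : Matrix (Fin r) (Fin r) ℂ) + C) * C.map 𝕔 = w • C.map 𝕔 + 1 := by
      rw [Matrix.add_mul, hCCc, Matrix.smul_mul, Matrix.one_mul]
    rw [h1, Matrix.smul_mul, one_mul, smul_add, smul_smul, hμw, hSdef, add_comm]
  have hμunit : IsUnit (μ • (1 : Matrix (Fin r) (Fin r) ℂ)) := by
    have hmul : (μ • (1 : Matrix (Fin r) (Fin r) ℂ)) * (μ⁻¹ • 1) = 1 := by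
      rw [Matrix.smul_mul, Matrix.mul_smul, one_mul, smul_smul, mul_inv_cancel₀ hμ0, one_smul]
    have hmul' : (μ⁻¹ • (1 : Matrix (Fin r) (Fin r) ℂ)) * (μ • 1) = 1 := by
      rw [Matrix.smul_mul, Matrix.mul_smul, one_mul, smul_smul, inv_mul_cancel₀ hμ0, one_smul]
    exact ⟨⟨μ • 1, μ⁻¹ • 1, hmul, hmul'⟩, rfl⟩
  have hCcunit : IsUnit (C.map 𝕔) := ⟨⟨C.map 𝕔, C, hCcC, hCCc⟩, rfl⟩
  have hSunit : IsUnit S := by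
    rw [hSfact]
    exact hμunit.mul (hwunit.mul hCcunit)
  have hdet : IsUnit S.det := (Matrix.isUnit_iff_isUnit_det S).mp hSunit
  have hSR : S * S⁻¹ = 1 := Matrix.mul_nonsing_inv S hdet
  have hSRc : S.map 𝕔 * S⁻¹.map 𝕔 = 1 := by
    rw [← Matrix.map_mul, hSR]
    exact Matrix.map_one _ (map_zero _) (map_one _)
  have hRcC : S⁻¹.map 𝕔 * C = S⁻¹ := by
    have h1 : C * S * S⁻¹.map 𝕔 = 1 := by rw [hCS]; exact hSRc
    have h2 : S * S⁻¹.map 𝕔 = C.map 𝕔 := by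
      calc S * S⁻¹.map 𝕔 = (C.map 𝕔 * C) * (S * S⁻¹.map 𝕔) := by rw [hCcC, one_mul]
      _ = C.map 𝕔 * (C * S * S⁻¹.map 𝕔) := by
          rw [mul_assoc, ← mul_assoc C S (S⁻¹.map 𝕔)]
      _ = C.map 𝕔 := by rw [h1, mul_one]
    have h3 : S * (S⁻¹.map 𝕔 * C) = 1 := by
      rw [← mul_assoc, h2, hCcC]
    exact (Matrix.inv_eq_right_inv h3).symm
  have hCSe : ∀ γ α, 𝕔 (∑ β, C γ β * S β α) = S γ α := by
    intro γ α
    have h := congrFun (congrFun hCS γ) α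
    have h' : (∑ β, C γ β * S β α) = 𝕔 (S γ α) := by
      simpa [Matrix.mul_apply, Matrix.map_apply] using h
    rw [h', Complex.conj_conj]
  have hRcCe : ∀ α β, (∑ γ, C γ β * 𝕔 (S⁻¹ α γ)) = S⁻¹ α β := by
    intro α β
    have h := congrFun (congrFun hRcC α) β
    rw [Matrix.mul_apply] at h
    rw [← h]
    exact Finset.sum_congr rfl fun γ _ => by rw [Matrix.map_apply, mul_comm]
  have hSSinv : ∀ β γ, (∑ α, S β α * S⁻¹ α γ) = if β = γ then 1 else 0 := by
    intro β γ
    have h := congrFun (congrFun hSR β) γ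
    simpa [Matrix.mul_apply, Matrix.one_apply] using h
  refine ⟨fun α => ∑ β, S β α • P β, fun α => ∑ γ, S⁻¹ α γ • Q γ, ?_, ?_, ?_⟩
  · intro α
    show _ᴴ = _
    ext i j
    rw [Matrix.conjTranspose_apply]
    calc 𝕔 ((∑ β, S β α • P β) j i)
        = ∑ β, 𝕔 (S β α) * 𝕔 (P β j i) := by
          simp [Matrix.sum_apply, Matrix.smul_apply, smul_eq_mul, map_sum, _root_.map_mul]
      _ = ∑ β, 𝕔 (S β α) * ∑ γ, 𝕔 (C γ β) * P γ i j := by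
          refine Finset.sum_congr rfl fun β _ => ?_
          rw [hE2 β i j]
      _ = ∑ β, ∑ γ, 𝕔 (S β α) * (𝕔 (C γ β) * P γ i j) := by
          refine Finset.sum_congr rfl fun β _ => Finset.mul_sum _ _ _
      _ = ∑ γ, ∑ β, 𝕔 (S β α) * (𝕔 (C γ β) * P γ i j) := Finset.sum_comm
      _ = ∑ γ, 𝕔 (∑ β, C γ β * S β α) * P γ i j := by
          refine Finset.sum_congr rfl fun γ _ => ?_
          rw [map_sum, Finset.sum_mul]
          exact Finset.sum_congr rfl fun β _ => by rw [_root_.map_mul]; ring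
      _ = ∑ γ, S γ α * P γ i j := by
          refine Finset.sum_congr rfl fun γ _ => ?_
          rw [hCSe γ α]
      _ = (∑ β, S β α • P β) i j := by
          simp [Matrix.sum_apply, Matrix.smul_apply, smul_eq_mul]
  · intro α
    show _ᴴ = _
    ext k l
    rw [Matrix.conjTranspose_apply]
    calc 𝕔 ((∑ γ, S⁻¹ α γ • Q γ) l k)
        = ∑ γ, 𝕔 (S⁻¹ α γ) * 𝕔 (Q γ l k) := by
          simp [Matrix.sum_apply, Matrix.smul_apply, smul_eq_mul, map_sum, _root_.map_mul]
      _ = ∑ γ, 𝕔 (S⁻¹ α γ) * ∑ β, C γ β * Q β k l := by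
          refine Finset.sum_congr rfl fun γ _ => ?_
          rw [hE4 γ k l]
      _ = ∑ γ, ∑ β, 𝕔 (S⁻¹ α γ) * (C γ β * Q β k l) := by
          refine Finset.sum_congr rfl fun γ _ => Finset.mul_sum _ _ _
      _ = ∑ β, ∑ γ, 𝕔 (S⁻¹ α γ) * (C γ β * Q β k l) := Finset.sum_comm
      _ = ∑ β, (∑ γ, C γ β * 𝕔 (S⁻¹ α γ)) * Q β k l := by
          refine Finset.sum_congr rfl fun β _ => ?_
          rw [Finset.sum_mul]
          exact Finset.sum_congr rfl fun γ _ => by ring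
      _ = ∑ β, S⁻¹ α β * Q β k l := by
          refine Finset.sum_congr rfl fun β _ => ?_
          rw [hRcCe α β]
      _ = (∑ γ, S⁻¹ α γ • Q γ) k l := by
          simp [Matrix.sum_apply, Matrix.smul_apply, smul_eq_mul]
  · ext ⟨i, k⟩ ⟨j, l⟩
    simp only [Matrix.sum_apply, Matrix.kroneckerMap_apply, Matrix.smul_apply, smul_eq_mul]
    calc ∑ α, P α i j * Q α k l
        = ∑ β, ∑ γ, (if β = γ then 1 else 0) * (P β i j * Q γ k l) := by
          symm
          refine Finset.sum_congr rfl fun β _ => ?_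
          simp [ite_mul, zero_mul, one_mul, Finset.sum_ite_eq]
      _ = ∑ β, ∑ γ, (∑ α, S β α * S⁻¹ α γ) * (P β i j * Q γ k l) := by
          refine Finset.sum_congr rfl fun β _ => Finset.sum_congr rfl fun γ _ => ?_
          rw [hSSinv β γ]
      _ = ∑ β, ∑ γ, ∑ α, (S β α * P β i j) * (S⁻¹ α γ * Q γ k l) := by
          refine Finset.sum_congr rfl fun β _ => Finset.sum_congr rfl fun γ _ => ?_
          rw [Finset.sum_mul]
          exact Finset.sum_congr rfl fun α _ => by ring
      _ = ∑ β, ∑ α, ∑ γ, (S β α * P β i j) * (S⁻¹ α γ * Q γ k l) :=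
          Finset.sum_congr rfl fun β _ => Finset.sum_comm
      _ = ∑ α, ∑ β, ∑ γ, (S β α * P β i j) * (S⁻¹ α γ * Q γ k l) := Finset.sum_comm
      _ = ∑ α, (∑ β, S β α * P β i j) * (∑ γ, S⁻¹ α γ * Q γ k l) := by
          refine Finset.sum_congr rfl fun α _ => ?_
          rw [Finset.sum_mul]
          exact Finset.sum_congr rfl fun β _ => (Finset.mul_sum _ _ _).symm
end

section
/- Let P₁, …, P_m ∈ Her_s be ℝ-linearly independent, let Q₁, …, Q_m ∈ Her_t, and suppose ρ = Σ_{i=1}^m P_i ⊗ Q_i is positive semidefinite. Let C = {b ∈ ℝ^m : Σ_i b_i P_i ⪰ 0} and V = span_ℝ{P₁,…,P_m}. Then the tuple (Q₁,…,Q_m) lies in the t-th level of the minimal operator system C^min (i.e. (Q₁,…,Q_m) = Σ_{j=1}^n v_j ⊗ H_j with v_j ∈ C and H_j ∈ PSD_t) if and only if ρ admits a separable decomposition ρ = Σ_{j=1}^n P̃_j ⊗ Q̃_j with all P̃_j ⪰ 0, Q̃_j ⪰ 0, and each P̃_j ∈ V. -/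
open scoped Kronecker ComplexOrder
open Matrix

lemma swap_sum {m n s t : ℕ} (v : Fin n → Fin m → ℝ)
    (P : Fin m → Matrix (Fin s) (Fin s) ℂ) (B : Fin n → Matrix (Fin t) (Fin t) ℂ) :
    ∑ j, (∑ i, v j i • P i) ⊗ₖ B j = ∑ i, P i ⊗ₖ (∑ j, v j i • B j) := by
  ext ⟨x, a⟩ ⟨y, b⟩
  simp only [Matrix.sum_apply, Matrix.kroneckerMap_apply, Matrix.smul_apply,
    Finset.sum_mul, Finset.mul_sum, smul_mul_assoc, mul_smul_comm]
  exact Finset.sum_comm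

lemma herm_ci {m s : ℕ} (P : Fin m → Matrix (Fin s) (Fin s) ℂ)
    (hP : ∀ i, (P i).IsHermitian) (hPind : LinearIndependent ℝ P)
    (c : Fin m → ℂ) (h : ∑ i, c i • P i = 0) : ∀ i, c i = 0 := by
  have hconj : ∑ i, (starRingEnd ℂ (c i)) • P i = 0 := by
    have := congrArg Matrix.conjTranspose h
    simpa [Matrix.conjTranspose_sum, Matrix.conjTranspose_smul, (hP _).eq] using this
  have hre : ∀ i, (c i).re = 0 := by
    have hsum : ∑ i, ((c i).re : ℝ) • P i = 0 := by
      have : ∑ i, (((c i).re : ℂ)) • P i = 0 := by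
        have := congrArg (fun M => (2 : ℂ)⁻¹ • M) (congrArg₂ (· + ·) h hconj)
        simp only [← Finset.sum_add_distrib, ← add_smul, smul_zero, add_zero, Finset.smul_sum,
          smul_smul] at this
        rw [← this]
        refine Finset.sum_congr rfl fun i _ => ?_
        congr 1
        have : c i + starRingEnd ℂ (c i) = 2 * (c i).re := by
          simp [Complex.add_conj]
        rw [this]; ring
      calc ∑ i, ((c i).re : ℝ) • P i = ∑ i, (((c i).re : ℂ)) • P i := by
            refine Finset.sum_congr rfl fun i _ => ?_
            rw [← algebraMap_smul ℂ ((c i).re : ℝ) (P i)]; rfl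
        _ = 0 := this
    exact fun i => (Fintype.linearIndependent_iff.mp hPind _ hsum) i
  have him : ∀ i, (c i).im = 0 := by
    have hsum : ∑ i, ((c i).im : ℝ) • P i = 0 := by
      have h2 : ∑ i, (((c i).im : ℂ)) • P i = 0 := by
        have := congrArg (fun M => ((2 : ℂ) * Complex.I)⁻¹ • M) (congrArg₂ (· - ·) h hconj)
        simp only [← Finset.sum_sub_distrib, ← sub_smul, smul_zero, sub_zero, Finset.smul_sum,
          smul_smul] at this
        rw [← this]
        refine Finset.sum_congr rfl fun i _ => ?_
        congr 1
        have hsub : c i - starRingEnd ℂ (c i) = 2 * (c i).im * Complex.I := by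
          simp [Complex.sub_conj]
        rw [hsub]
        field_simp
      calc ∑ i, ((c i).im : ℝ) • P i = ∑ i, (((c i).im : ℂ)) • P i := by
            refine Finset.sum_congr rfl fun i _ => ?_
            rw [← algebraMap_smul ℂ ((c i).im : ℝ) (P i)]; rfl
        _ = 0 := h2
    exact fun i => (Fintype.linearIndependent_iff.mp hPind _ hsum) i
  intro i
  exact Complex.ext (hre i) (him i)

theorem stmt_5 (s t m : ℕ)
    (P : Fin m → Matrix (Fin s) (Fin s) ℂ)
    (Q : Fin m → Matrix (Fin t) (Fin t) ℂ)
    (hP : ∀ i, (P i).IsHermitian) (hQ : ∀ i, (Q i).IsHermitian)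
    (hPind : LinearIndependent ℝ P)
    (hρ : (∑ i, P i ⊗ₖ Q i).PosSemidef) :
    ((∃ (n : ℕ) (v : Fin n → Fin m → ℝ) (H : Fin n → Matrix (Fin t) (Fin t) ℂ),
        (∀ j, (∑ i, v j i • P i).PosSemidef) ∧ (∀ j, (H j).PosSemidef) ∧
        ∀ i, Q i = ∑ j, v j i • H j) ↔
      (∃ (n : ℕ) (Pt : Fin n → Matrix (Fin s) (Fin s) ℂ)
          (Qt : Fin n → Matrix (Fin t) (Fin t) ℂ),
        (∀ j, (Pt j).PosSemidef) ∧ (∀ j, (Qt j).PosSemidef) ∧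
        (∀ j, Pt j ∈ Submodule.span ℝ (Set.range P)) ∧
        ∑ i, P i ⊗ₖ Q i = ∑ j, Pt j ⊗ₖ Qt j)) := by
  constructor
  · rintro ⟨n, v, H, hv, hH, hQeq⟩
    refine ⟨n, fun j => ∑ i, v j i • P i, H, hv, hH, ?_, ?_⟩
    · intro j
      exact Submodule.sum_mem _ fun i _ =>
        Submodule.smul_mem _ _ (Submodule.subset_span ⟨i, rfl⟩)
    · rw [swap_sum]
      exact Finset.sum_congr rfl fun i _ => by rw [hQeq i]
  · rintro ⟨n, Pt, Qt, hPt, hQt, hspan, heq⟩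
    have hv : ∀ j, ∃ c : Fin m → ℝ, ∑ i, c i • P i = Pt j := by
      intro j
      exact (Finsupp.mem_span_range_iff_exists_finsupp.mp (hspan j)).elim
        fun c hc => ⟨c, by rw [← hc, Finsupp.sum_fintype]; intro; simp⟩
    choose v hveq using hv
    refine ⟨n, v, Qt, fun j => (hveq j) ▸ hPt j, hQt, ?_⟩
    intro i
    -- show ∑ i, P i ⊗ₖ (Q i - S i) = 0 where S i = ∑ j, v j i • Qt j
    have hkey : ∑ i', P i' ⊗ₖ (Q i' - ∑ j, v j i' • Qt j) = 0 := by
      have h2 : ∑ j, Pt j ⊗ₖ Qt j = ∑ i', P i' ⊗ₖ (∑ j, v j i' • Qt j) := by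
        rw [← swap_sum]
        exact Finset.sum_congr rfl fun j _ => by rw [hveq j]
      have : ∑ i', P i' ⊗ₖ (Q i') - ∑ i', P i' ⊗ₖ (∑ j, v j i' • Qt j) = 0 := by
        rw [← h2, heq, sub_self]
      rw [← this, ← Finset.sum_sub_distrib]
      refine Finset.sum_congr rfl fun i' _ => ?_
      ext ⟨x, a⟩ ⟨y, b⟩
      simp [Matrix.kroneckerMap_apply, mul_sub]
    have hzero : ∀ i' a b, (Q i' - ∑ j, v j i' • Qt j) a b = 0 := by
      intro i' a b
      have hc : ∑ k, ((Q k - ∑ j, v j k • Qt j) a b) • P k = 0 := by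
        ext x y
        have := congrFun (congrFun hkey (x, a)) (y, b)
        simp only [Matrix.sum_apply, Matrix.kroneckerMap_apply, Matrix.zero_apply] at this
        simp only [Matrix.sum_apply, Matrix.smul_apply, smul_eq_mul]
        simpa [mul_comm] using this
      exact herm_ci P hP hPind _ hc i'
    have : Q i - ∑ j, v j i • Qt j = 0 := by
      ext a b; exact hzero i a b
    have := sub_eq_zero.mp this
    rw [this]
end

section
/- Let P₁, …, P_m ∈ Her_s be ℝ-linearly independent and suppose the spectrahedral cone C = {b ∈ ℝ^m : Σ_i b_i P_i ⪰ 0} is a simplex cone (i.e. the conic hull of m linearly independent vectors v₁,…,v_m ∈ ℝ^m). Then for any Q₁, …, Q_m ∈ Her_t with ρ = Σ_{i=1}^m P_i ⊗ Q_i ⪰ 0, the matrix ρ is separable and admits a separable decomposition with at most m terms, i.e. ρ = Σ_{j=1}^m σ_j ⊗ τ_j with σ_j ∈ PSD_s, τ_j ∈ PSD_t. -/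
open scoped Kronecker ComplexOrder
open Matrix

private lemma kron_mulVec_prod {s t : ℕ} (A : Matrix (Fin s) (Fin s) ℂ)
    (B : Matrix (Fin t) (Fin t) ℂ) (y : Fin s → ℂ) (x : Fin t → ℂ) :
    (A ⊗ₖ B) *ᵥ (fun p : Fin s × Fin t => y p.1 * x p.2) =
      fun p : Fin s × Fin t => (A *ᵥ y) p.1 * (B *ᵥ x) p.2 := by
  funext p
  obtain ⟨a, b⟩ := p
  simp only [Matrix.mulVec, dotProduct, Matrix.kroneckerMap_apply,
    Fintype.sum_prod_type, Finset.sum_mul, Finset.mul_sum]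
  rw [Finset.sum_comm]
  refine Finset.sum_congr rfl fun c _ => Finset.sum_congr rfl fun d _ => by ring

private lemma quad_kron {s t : ℕ} (A : Matrix (Fin s) (Fin s) ℂ)
    (B : Matrix (Fin t) (Fin t) ℂ) (y : Fin s → ℂ) (x : Fin t → ℂ) :
    star (fun p : Fin s × Fin t => y p.1 * x p.2) ⬝ᵥ
        ((A ⊗ₖ B) *ᵥ fun p : Fin s × Fin t => y p.1 * x p.2) =
      (star y ⬝ᵥ (A *ᵥ y)) * (star x ⬝ᵥ (B *ᵥ x)) := by
  rw [kron_mulVec_prod]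
  simp only [dotProduct, Pi.star_apply, Fintype.sum_prod_type, Finset.sum_mul,
    Finset.mul_sum, star_mul']
  rw [Finset.sum_comm]
  refine Finset.sum_congr rfl fun a _ => Finset.sum_congr rfl fun b _ => by ring

private lemma sum_kron {ι : Type*} {s t m n : ℕ} (f : ι → Matrix (Fin s) (Fin t) ℂ)
    (F : Finset ι) (B : Matrix (Fin m) (Fin n) ℂ) :
    (∑ i ∈ F, f i) ⊗ₖ B = ∑ i ∈ F, f i ⊗ₖ B := by
  ext p q
  simp [Matrix.kroneckerMap_apply, Matrix.sum_apply, Finset.sum_mul]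

private lemma kron_sum {ι : Type*} {s t m n : ℕ} (A : Matrix (Fin s) (Fin t) ℂ)
    (F : Finset ι) (f : ι → Matrix (Fin m) (Fin n) ℂ) :
    A ⊗ₖ (∑ i ∈ F, f i) = ∑ i ∈ F, A ⊗ₖ f i := by
  ext p q
  simp [Matrix.kroneckerMap_apply, Matrix.sum_apply, Finset.mul_sum]

private lemma mulVec_sum' {ι n : Type*} [Fintype n] (F : Finset ι) (f : ι → Matrix n n ℂ)
    (y : n → ℂ) : (∑ i ∈ F, f i) *ᵥ y = ∑ i ∈ F, f i *ᵥ y := by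
  funext k
  rw [Finset.sum_apply]
  simp only [Matrix.mulVec, dotProduct, Matrix.sum_apply, Finset.sum_mul]
  exact Finset.sum_comm

private lemma dot_sum' {ι n : Type*} [Fintype n] (F : Finset ι) (w : n → ℂ)
    (g : ι → n → ℂ) : w ⬝ᵥ (∑ i ∈ F, g i) = ∑ i ∈ F, w ⬝ᵥ g i := by
  simp only [dotProduct, Finset.sum_apply, Finset.mul_sum]
  exact Finset.sum_comm

private lemma quad_sum {ι n : Type*} [Fintype n] (F : Finset ι) (f : ι → Matrix n n ℂ)
    (y : n → ℂ) :
    star y ⬝ᵥ ((∑ i ∈ F, f i) *ᵥ y) = ∑ i ∈ F, star y ⬝ᵥ (f i *ᵥ y) := by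
  rw [mulVec_sum', dot_sum']

theorem stmt_6 (s t m : ℕ)
    (P : Fin m → Matrix (Fin s) (Fin s) ℂ)
    (hP : ∀ i, (P i).IsHermitian) (hPind : LinearIndependent ℝ P)
    (v : Fin m → Fin m → ℝ) (hv : LinearIndependent ℝ v)
    (hC : ∀ b : Fin m → ℝ, (∑ i, b i • P i).PosSemidef ↔
      ∃ c : Fin m → ℝ, (∀ j, 0 ≤ c j) ∧ b = ∑ j, c j • v j)
    (Q : Fin m → Matrix (Fin t) (Fin t) ℂ) (hQ : ∀ i, (Q i).IsHermitian)
    (hρ : (∑ i, P i ⊗ₖ Q i).PosSemidef) :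
    ∃ (σ : Fin m → Matrix (Fin s) (Fin s) ℂ) (τ : Fin m → Matrix (Fin t) (Fin t) ℂ),
      (∀ j, (σ j).PosSemidef) ∧ (∀ j, (τ j).PosSemidef) ∧
      ∑ i, P i ⊗ₖ Q i = ∑ j, σ j ⊗ₖ τ j := by
  classical
  set V : Matrix (Fin m) (Fin m) ℝ := Matrix.of v with hVdef
  have hVu : IsUnit V := Matrix.linearIndependent_rows_iff_isUnit.mp hv
  have hVdet : IsUnit V.det := (Matrix.isUnit_iff_isUnit_det V).mp hVu
  set W : Matrix (Fin m) (Fin m) ℝ := V⁻¹ with hWdef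
  have hWV : W * V = 1 := Matrix.nonsing_inv_mul V hVdet
  have hVW : V * W = 1 := Matrix.mul_nonsing_inv V hVdet
  set σ : Fin m → Matrix (Fin s) (Fin s) ℂ := fun j => ∑ i, v j i • P i with hσdef
  set τ : Fin m → Matrix (Fin t) (Fin t) ℂ := fun j => ∑ i, W i j • Q i with hτdef
  have hσpsd : ∀ j, (σ j).PosSemidef := by
    intro j
    refine (hC (v j)).mpr ⟨fun k => if k = j then 1 else 0, fun k => by positivity, ?_⟩
    symm
    calc ∑ k, (if k = j then (1:ℝ) else 0) • v k = ∑ k, if k = j then v k else 0 := by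
          refine Finset.sum_congr rfl fun k _ => ?_
          split <;> simp
      _ = v j := by rw [Finset.sum_ite_eq' Finset.univ j v]; simp
  have hPdec : ∀ i, P i = ∑ j, W i j • σ j := by
    intro i
    have h1 : ∑ j, W i j • σ j = ∑ k, ((W * V) i k) • P k := by
      simp only [hσdef, Finset.smul_sum, smul_smul, Matrix.mul_apply]
      rw [Finset.sum_comm]
      refine Finset.sum_congr rfl fun k _ => ?_
      rw [Finset.sum_smul]
      rfl
    rw [h1, hWV]
    symm
    calc ∑ k, ((1 : Matrix (Fin m) (Fin m) ℝ) i k) • P k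
        = ∑ k, if i = k then P k else 0 := by
          refine Finset.sum_congr rfl fun k _ => ?_
          rw [Matrix.one_apply]
          split <;> simp
      _ = P i := by rw [Finset.sum_ite_eq Finset.univ i P]; simp
  refine ⟨σ, τ, hσpsd, ?_, ?_⟩
  · intro j
    have hτherm : (τ j).IsHermitian := by
      rw [Matrix.IsHermitian, hτdef, Matrix.conjTranspose_sum]
      refine Finset.sum_congr rfl fun i _ => ?_
      rw [Matrix.conjTranspose_smul, star_trivial, (hQ i).eq]
    refine Matrix.PosSemidef.of_dotProduct_mulVec_nonneg hτherm fun x => ?_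
    have hqreal : ∀ i, (((star x ⬝ᵥ (Q i *ᵥ x)).re : ℝ) : ℂ) = star x ⬝ᵥ (Q i *ᵥ x) := by
      intro i
      have hst : (starRingEnd ℂ) (star x ⬝ᵥ (Q i *ᵥ x)) = star x ⬝ᵥ (Q i *ᵥ x) := by
        rw [← Complex.star_def]
        conv_lhs => rw [Matrix.star_dotProduct, star_star]
        rw [Matrix.star_mulVec, (hQ i).eq, ← Matrix.dotProduct_mulVec]
      exact Complex.conj_eq_iff_re.mp hst
    set b : Fin m → ℝ := fun i => (star x ⬝ᵥ (Q i *ᵥ x)).re with hbdef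
    have hbq : ∀ i, ((b i : ℝ) : ℂ) = star x ⬝ᵥ (Q i *ᵥ x) := fun i => hqreal i
    have hbPSD : (∑ i, b i • P i).PosSemidef := by
      refine Matrix.PosSemidef.of_dotProduct_mulVec_nonneg ?_ ?_
      · rw [Matrix.IsHermitian, Matrix.conjTranspose_sum]
        refine Finset.sum_congr rfl fun i _ => ?_
        rw [Matrix.conjTranspose_smul, star_trivial, (hP i).eq]
      · intro y
        have key : star y ⬝ᵥ ((∑ i, b i • P i) *ᵥ y) =
            star (fun p : Fin s × Fin t => y p.1 * x p.2) ⬝ᵥ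
              ((∑ i, P i ⊗ₖ Q i) *ᵥ fun p : Fin s × Fin t => y p.1 * x p.2) := by
          rw [quad_sum, quad_sum]
          refine Finset.sum_congr rfl fun i _ => ?_
          rw [quad_kron, Matrix.smul_mulVec, dotProduct_smul,
            Complex.real_smul, ← hbq i]
          ring
        rw [key]
        exact hρ.dotProduct_mulVec_nonneg _
    obtain ⟨c, hc, hbc⟩ := (hC b).mp hbPSD
    have hbi : ∀ i, b i = ∑ k, c k * v k i := by
      intro i
      conv_lhs => rw [hbc]
      simp [Finset.sum_apply]
    have hsum : ∑ i, W i j * b i = c j := by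
      calc ∑ i, W i j * b i = ∑ i, ∑ k, c k * (v k i * W i j) := by
            refine Finset.sum_congr rfl fun i _ => ?_
            rw [hbi i, Finset.mul_sum]
            exact Finset.sum_congr rfl fun k _ => by ring
        _ = ∑ k, c k * ((V * W) k j) := by
            rw [Finset.sum_comm]
            refine Finset.sum_congr rfl fun k _ => ?_
            rw [Matrix.mul_apply, Finset.mul_sum]
            rfl
        _ = c j := by
            rw [hVW]
            rw [Finset.sum_eq_single j (fun k _ hk => by
              rw [Matrix.one_apply_ne hk, mul_zero]) (by simp)]
            rw [Matrix.one_apply_eq, mul_one]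
    have hval : star x ⬝ᵥ (τ j *ᵥ x) = ((c j : ℝ) : ℂ) := by
      rw [hτdef]
      rw [quad_sum]
      have h2 : ∀ i, star x ⬝ᵥ ((W i j • Q i) *ᵥ x) = ((W i j * b i : ℝ) : ℂ) := by
        intro i
        rw [Matrix.smul_mulVec, dotProduct_smul, Complex.real_smul, ← hbq i]
        push_cast
        ring
      rw [Finset.sum_congr rfl fun i _ => h2 i, ← Complex.ofReal_sum, hsum]
    rw [hval]
    exact Complex.zero_le_real.mpr (hc j)
  · calc ∑ i, P i ⊗ₖ Q i = ∑ i, (∑ j, W i j • σ j) ⊗ₖ Q i := by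
          exact Finset.sum_congr rfl fun i _ => by rw [← hPdec]
      _ = ∑ j, σ j ⊗ₖ τ j := by
          simp only [sum_kron, Matrix.smul_kronecker]
          rw [Finset.sum_comm]
          refine Finset.sum_congr rfl fun j _ => ?_
          rw [hτdef, kron_sum]
          exact Finset.sum_congr rfl fun i _ => by rw [Matrix.kronecker_smul]
end

section
/- There exist 3 × 3 real symmetric matrices P₁, P₂, P₃ and 2 × 2 real symmetric matrices Q₁, Q₂, Q₃ such that ρ = Σ_{i=1}^3 P_i ⊗ Q_i is positive semidefinite and separable, yet (Q₁, Q₂, Q₃) does not lie in C₂^min where C = {b ∈ ℝ³ : Σ_i b_i P_i ⪰ 0}. Concretely, one can take P₁ = I₃, P₂ = E₁₂ + E₂₁, P₃ = E₁₃ + E₃₁, Q₁ = I₂, Q₂ = (1/2)E₁₁, Q₃ = (3/4)(E₁₂ + E₂₁); then C is the circular cone {(a,b,c) : b²+c² ≤ a², a ≥ 0}, ρ ⪰ 0 is separable, but I₂ ⊗ Q₁ + σ_z ⊗ Q₂ + σ_x ⊗ Q₃ is not positive semidefinite, witnessing (Q₁,Q₂,Q₃) ∉ C₂^min. -/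
open scoped Kronecker ComplexOrder
open Matrix

lemma psd_of_eq {m n : ℕ} (A : Matrix (Fin m) (Fin n) ℂ) {B : Matrix (Fin n) (Fin n) ℂ}
    (h : B = Aᴴ * A) : B.PosSemidef := h ▸ posSemidef_conjTranspose_mul_self A

lemma kron_psd {m n : ℕ} {A : Matrix (Fin m) (Fin m) ℂ} {B : Matrix (Fin n) (Fin n) ℂ}
    (hA : A.PosSemidef) (hB : B.PosSemidef) : (A ⊗ₖ B).PosSemidef := by
  exact hA.kronecker hB

lemma psd_sum {N : Type*} [Fintype N] [DecidableEq N] {ι : Type*} (s : Finset ι)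
    (f : ι → Matrix N N ℂ)
    (h : ∀ j ∈ s, (f j).PosSemidef) : (∑ j ∈ s, f j).PosSemidef := by
  classical
  induction s using Finset.induction with
  | empty => simpa using Matrix.PosSemidef.zero
  | insert _ _ hx ih =>
    rw [Finset.sum_insert hx]
    exact (h _ (Finset.mem_insert_self _ _)).add (ih fun j hj => h j (Finset.mem_insert_of_mem hj))

lemma kron_sum_right {p n : ℕ} (A : Matrix (Fin p) (Fin p) ℂ)
    (f : Fin n → Matrix (Fin 2) (Fin 2) ℂ) :
    A ⊗ₖ (∑ j, f j) = ∑ j, A ⊗ₖ f j := by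
  ext ⟨i, k⟩ ⟨j, l⟩
  simp [kroneckerMap_apply, Matrix.sum_apply, Finset.mul_sum]

lemma cone3 (b : Fin 3 → ℝ) :
    (!![(b 0 : ℂ), b 1, b 2; b 1, b 0, 0; b 2, 0, b 0]).PosSemidef ↔
      (b 1) ^ 2 + (b 2) ^ 2 ≤ (b 0) ^ 2 ∧ 0 ≤ b 0 := by
  constructor
  · intro h
    have h1 : (0:ℝ) ≤ b 0 := by
      have := h.dotProduct_mulVec_nonneg ![1, 0, 0]
      simp [dotProduct, mulVec, Fin.sum_univ_three, Complex.le_def] at this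
      exact this
    have h2 : (0:ℝ) ≤ b 0 - 2 * ((b 1)^2 + (b 2)^2) + b 0 * ((b 1)^2 + (b 2)^2) := by
      have := h.dotProduct_mulVec_nonneg ![((-1 : ℝ) : ℂ), ((b 1 : ℝ) : ℂ), ((b 2 : ℝ) : ℂ)]
      simp [dotProduct, mulVec, Fin.sum_univ_three, Complex.le_def,
        ← Complex.ofReal_pow] at this
      nlinarith [this]
    have h3 : (0:ℝ) ≤ b 0 * ((b 1)^2 + (b 2)^2) * ((b 0)^2 - ((b 1)^2 + (b 2)^2)) := by
      have := h.dotProduct_mulVec_nonneg ![((-((b 1)^2 + (b 2)^2) : ℝ) : ℂ), ((b 0 * b 1 : ℝ) : ℂ), ((b 0 * b 2 : ℝ) : ℂ)]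
      simp [dotProduct, mulVec, Fin.sum_univ_three, Complex.le_def,
        ← Complex.ofReal_pow] at this
      nlinarith [this]
    refine ⟨?_, h1⟩
    rcases le_or_gt ((b 1)^2 + (b 2)^2) 0 with hs | hs
    · nlinarith [sq_nonneg (b 0)]
    · rcases h1.eq_or_lt with hb | hb
      · have hb0 : b 0 = 0 := hb.symm
        rw [hb0] at h2
        simp at h2
        linarith
      · nlinarith [mul_pos hb hs]
  · rintro ⟨hle, h0⟩
    refine PosSemidef.of_dotProduct_mulVec_nonneg ?_ ?_
    · ext i j
      fin_cases i <;> fin_cases j <;>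
        simp [conjTranspose_apply, Complex.ext_iff]
    · intro x
      rw [Complex.le_def]
      constructor
      · simp only [dotProduct, mulVec, Fin.sum_univ_three]
        simp [Complex.add_re, Complex.mul_re, Complex.mul_im, Complex.add_im]
        rcases h0.eq_or_lt with hb | hb
        · have hb0 : b 0 = 0 := hb.symm
          have hb1 : b 1 = 0 := by nlinarith [sq_nonneg (b 1), sq_nonneg (b 2)]
          have hb2 : b 2 = 0 := by nlinarith [sq_nonneg (b 1), sq_nonneg (b 2)]
          norm_num [hb0, hb1, hb2]
        · nlinarith [sq_nonneg (b 0 * (x 1).re + b 1 * (x 0).re),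
            sq_nonneg (b 0 * (x 1).im + b 1 * (x 0).im),
            sq_nonneg (b 0 * (x 2).re + b 2 * (x 0).re),
            sq_nonneg (b 0 * (x 2).im + b 2 * (x 0).im),
            mul_nonneg (sub_nonneg.2 hle) (add_nonneg (sq_nonneg (x 0).re) (sq_nonneg (x 0).im)),
            hb]
      · simp only [dotProduct, mulVec, Fin.sum_univ_three]
        simp [Complex.add_im, Complex.mul_im, Complex.mul_re]
        ring

lemma cone2 (v : Fin 3 → ℝ) (hle : v 1 ^ 2 + v 2 ^ 2 ≤ v 0 ^ 2) (h0 : 0 ≤ v 0) :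
    (!![((v 0 + v 1 : ℝ) : ℂ), ((v 2 : ℝ) : ℂ);
        ((v 2 : ℝ) : ℂ), ((v 0 - v 1 : ℝ) : ℂ)]).PosSemidef := by
  have hsum : 0 ≤ v 0 + v 1 := by nlinarith [sq_nonneg (v 2)]
  refine PosSemidef.of_dotProduct_mulVec_nonneg ?_ ?_
  · ext i j
    fin_cases i <;> fin_cases j <;> simp [conjTranspose_apply, Complex.ext_iff]
  · intro x
    rw [Complex.le_def]
    constructor
    · simp only [dotProduct, mulVec, Fin.sum_univ_two]
      simp [Complex.add_re, Complex.mul_re, Complex.mul_im, Complex.add_im]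
      rcases hsum.eq_or_lt with hb | hb
      · have hv2 : v 2 = 0 := by nlinarith [sq_nonneg (v 2)]
        have hv1 : v 1 = -(v 0) := by linarith
        rw [hv2, hv1]
        nlinarith [mul_nonneg h0 (add_nonneg (sq_nonneg (x 1).re) (sq_nonneg (x 1).im))]
      · nlinarith [sq_nonneg ((v 0 + v 1) * (x 0).re + v 2 * (x 1).re),
          sq_nonneg ((v 0 + v 1) * (x 0).im + v 2 * (x 1).im),
          mul_nonneg (sub_nonneg.2 hle) (add_nonneg (sq_nonneg (x 1).re) (sq_nonneg (x 1).im)),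
          hb]
    · simp only [dotProduct, mulVec, Fin.sum_univ_two]
      simp [Complex.add_im, Complex.mul_im, Complex.mul_re]
      ring

set_option maxHeartbeats 2000000 in
theorem stmt_9 :
    ∃ (P : Fin 3 → Matrix (Fin 3) (Fin 3) ℂ) (Q : Fin 3 → Matrix (Fin 2) (Fin 2) ℂ),
      P = ![(1 : Matrix (Fin 3) (Fin 3) ℂ),
            !![0, 1, 0; 1, 0, 0; 0, 0, 0],
            !![0, 0, 1; 0, 0, 0; 1, 0, 0]] ∧
      Q = ![(1 : Matrix (Fin 2) (Fin 2) ℂ),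
            !![1/2, 0; 0, 0],
            !![0, 3/4; 3/4, 0]] ∧
      -- the circular cone description of C = FS₁(P₁,P₂,P₃)
      (∀ b : Fin 3 → ℝ, (∑ i, b i • P i).PosSemidef ↔
          (b 1) ^ 2 + (b 2) ^ 2 ≤ (b 0) ^ 2 ∧ 0 ≤ b 0) ∧
      -- ρ is positive semidefinite
      (∑ i, P i ⊗ₖ Q i).PosSemidef ∧
      -- ρ is separable
      (∃ (n : ℕ) (σ : Fin n → Matrix (Fin 3) (Fin 3) ℂ)
          (τ : Fin n → Matrix (Fin 2) (Fin 2) ℂ),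
        (∀ j, (σ j).PosSemidef) ∧ (∀ j, (τ j).PosSemidef) ∧
        ∑ i, P i ⊗ₖ Q i = ∑ j, σ j ⊗ₖ τ j) ∧
      -- the witness: I₂ ⊗ Q₁ + σ_z ⊗ Q₂ + σ_x ⊗ Q₃ is not positive semidefinite
      ¬ ((1 : Matrix (Fin 2) (Fin 2) ℂ) ⊗ₖ Q 0 + !![1, 0; 0, -1] ⊗ₖ Q 1
          + !![0, 1; 1, 0] ⊗ₖ Q 2).PosSemidef ∧
      -- hence (Q₁,Q₂,Q₃) ∉ C₂^min
      ¬ (∃ (n : ℕ) (v : Fin n → Fin 3 → ℝ) (H : Fin n → Matrix (Fin 2) (Fin 2) ℂ),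
          (∀ j, (∑ i, v j i • P i).PosSemidef) ∧ (∀ j, (H j).PosSemidef) ∧
          ∀ i, Q i = ∑ j, v j i • H j) := by
  set P : Fin 3 → Matrix (Fin 3) (Fin 3) ℂ :=
    ![(1 : Matrix (Fin 3) (Fin 3) ℂ),
      !![0, 1, 0; 1, 0, 0; 0, 0, 0],
      !![0, 0, 1; 0, 0, 0; 1, 0, 0]] with hP
  set Q : Fin 3 → Matrix (Fin 2) (Fin 2) ℂ :=
    ![(1 : Matrix (Fin 2) (Fin 2) ℂ),
      !![1/2, 0; 0, 0],
      !![0, 3/4; 3/4, 0]] with hQdef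
  have key : ∀ b : Fin 3 → ℝ,
      (∑ i, b i • P i) = !![(b 0 : ℂ), b 1, b 2; b 1, b 0, 0; b 2, 0, b 0] := by
    intro b
    ext i j
    fin_cases i <;> fin_cases j <;>
      simp [hP, Fin.sum_univ_three, Matrix.smul_apply, Matrix.one_apply,
        Matrix.vecHead, Matrix.vecTail, Complex.real_smul] <;> norm_num
  have hsep : ∑ i, P i ⊗ₖ Q i =
      ∑ j, (![!![(1/4 : ℂ), 1/2, 0; 1/2, 1, 0; 0, 0, 0],
              !![1, 0, 1; 0, 0, 0; 1, 0, 1],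
              !![1, 0, -1; 0, 0, 0; -1, 0, 1],
              !![1, 0, 0; 0, 0, 0; 0, 0, 0],
              !![0, 0, 0; 0, 1, 0; 0, 0, 0],
              !![0, 0, 0; 0, 0, 0; 0, 0, 1]] j) ⊗ₖ
          (![!![(1 : ℂ), 0; 0, 0],
             !![3/8, 3/8; 3/8, 3/8],
             !![3/8, -3/8; -3/8, 3/8],
             !![0, 0; 0, 1/4],
             !![0, 0; 0, 1],
             !![1/4, 0; 0, 1/4]] j) := by
    simp only [hP, hQdef, Fin.sum_univ_succ, Finset.univ_unique, Fin.default_eq_zero,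
      Finset.sum_singleton, Matrix.cons_val_zero, Matrix.cons_val_succ]
    ext ⟨i, k⟩ ⟨j, l⟩
    fin_cases i <;> fin_cases j <;> fin_cases k <;> fin_cases l <;>
      simp [kroneckerMap_apply, Matrix.one_apply, Matrix.vecHead, Matrix.vecTail] <;>
      norm_num [Prod.ext_iff, Fin.ext_iff]
  have S0 : (!![(1/4 : ℂ), 1/2, 0; 1/2, 1, 0; 0, 0, 0]).PosSemidef :=
    psd_of_eq !![1/2, 1, 0] (by
      ext i j; fin_cases i <;> fin_cases j <;>
        simp [Matrix.mul_apply, Fin.sum_univ_succ, Matrix.vecHead, Matrix.vecTail,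
          map_inv₀, map_ofNat] <;> norm_num)
  have S1 : (!![(1 : ℂ), 0, 1; 0, 0, 0; 1, 0, 1]).PosSemidef :=
    psd_of_eq !![1, 0, 1] (by
      ext i j; fin_cases i <;> fin_cases j <;>
        simp [Matrix.mul_apply, Fin.sum_univ_succ, Matrix.vecHead, Matrix.vecTail,
          map_inv₀, map_ofNat] <;> norm_num)
  have S2 : (!![(1 : ℂ), 0, -1; 0, 0, 0; -1, 0, 1]).PosSemidef :=
    psd_of_eq !![1, 0, -1] (by
      ext i j; fin_cases i <;> fin_cases j <;>
        simp [Matrix.mul_apply, Fin.sum_univ_succ, Matrix.vecHead, Matrix.vecTail,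
          map_inv₀, map_ofNat] <;> norm_num)
  have S3 : (!![(1 : ℂ), 0, 0; 0, 0, 0; 0, 0, 0]).PosSemidef :=
    psd_of_eq !![1, 0, 0] (by
      ext i j; fin_cases i <;> fin_cases j <;>
        simp [Matrix.mul_apply, Fin.sum_univ_succ, Matrix.vecHead, Matrix.vecTail,
          map_inv₀, map_ofNat] <;> norm_num)
  have S4 : (!![(0 : ℂ), 0, 0; 0, 1, 0; 0, 0, 0]).PosSemidef :=
    psd_of_eq !![0, 1, 0] (by
      ext i j; fin_cases i <;> fin_cases j <;>
        simp [Matrix.mul_apply, Fin.sum_univ_succ, Matrix.vecHead, Matrix.vecTail,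
          map_inv₀, map_ofNat] <;> norm_num)
  have S5 : (!![(0 : ℂ), 0, 0; 0, 0, 0; 0, 0, 1]).PosSemidef :=
    psd_of_eq !![0, 0, 1] (by
      ext i j; fin_cases i <;> fin_cases j <;>
        simp [Matrix.mul_apply, Fin.sum_univ_succ, Matrix.vecHead, Matrix.vecTail,
          map_inv₀, map_ofNat] <;> norm_num)
  have T0 : (!![(1 : ℂ), 0; 0, 0]).PosSemidef :=
    psd_of_eq !![1, 0] (by
      ext i j; fin_cases i <;> fin_cases j <;>
        simp [Matrix.mul_apply, Fin.sum_univ_succ, Matrix.vecHead, Matrix.vecTail,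
          map_inv₀, map_ofNat] <;> norm_num)
  have T1 : (!![(3/8 : ℂ), 3/8; 3/8, 3/8]).PosSemidef :=
    psd_of_eq !![1/2, 1/2; 1/4, 1/4; 1/4, 1/4] (by
      ext i j; fin_cases i <;> fin_cases j <;>
        simp [Matrix.mul_apply, Fin.sum_univ_succ, Matrix.vecHead, Matrix.vecTail,
          map_inv₀, map_ofNat] <;> norm_num)
  have T2 : (!![(3/8 : ℂ), -3/8; -3/8, 3/8]).PosSemidef :=
    psd_of_eq !![1/2, -1/2; 1/4, -1/4; 1/4, -1/4] (by
      ext i j; fin_cases i <;> fin_cases j <;>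
        simp [Matrix.mul_apply, Fin.sum_univ_succ, Matrix.vecHead, Matrix.vecTail,
          map_inv₀, map_ofNat] <;> norm_num)
  have T3 : (!![(0 : ℂ), 0; 0, 1/4]).PosSemidef :=
    psd_of_eq !![0, 1/2] (by
      ext i j; fin_cases i <;> fin_cases j <;>
        simp [Matrix.mul_apply, Fin.sum_univ_succ, Matrix.vecHead, Matrix.vecTail,
          map_inv₀, map_ofNat] <;> norm_num)
  have T4 : (!![(0 : ℂ), 0; 0, 1]).PosSemidef :=
    psd_of_eq !![0, 1] (by
      ext i j; fin_cases i <;> fin_cases j <;>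
        simp [Matrix.mul_apply, Fin.sum_univ_succ, Matrix.vecHead, Matrix.vecTail,
          map_inv₀, map_ofNat] <;> norm_num)
  have T5 : (!![(1/4 : ℂ), 0; 0, 1/4]).PosSemidef :=
    psd_of_eq !![1/2, 0; 0, 1/2] (by
      ext i j; fin_cases i <;> fin_cases j <;>
        simp [Matrix.mul_apply, Fin.sum_univ_succ, Matrix.vecHead, Matrix.vecTail,
          map_inv₀, map_ofNat] <;> norm_num)
  have hσ : ∀ j : Fin 6,
      ((![!![(1/4 : ℂ), 1/2, 0; 1/2, 1, 0; 0, 0, 0],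
          !![1, 0, 1; 0, 0, 0; 1, 0, 1],
          !![1, 0, -1; 0, 0, 0; -1, 0, 1],
          !![1, 0, 0; 0, 0, 0; 0, 0, 0],
          !![0, 0, 0; 0, 1, 0; 0, 0, 0],
          !![0, 0, 0; 0, 0, 0; 0, 0, 1]] : Fin 6 → Matrix (Fin 3) (Fin 3) ℂ) j).PosSemidef := by
    intro j
    fin_cases j
    exacts [S0, S1, S2, S3, S4, S5]
  have hτ : ∀ j : Fin 6,
      ((![!![(1 : ℂ), 0; 0, 0],
          !![3/8, 3/8; 3/8, 3/8],
          !![3/8, -3/8; -3/8, 3/8],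
          !![0, 0; 0, 1/4],
          !![0, 0; 0, 1],
          !![1/4, 0; 0, 1/4]] : Fin 6 → Matrix (Fin 2) (Fin 2) ℂ) j).PosSemidef := by
    intro j
    fin_cases j
    exacts [T0, T1, T2, T3, T4, T5]
  have hwit : ¬ ((1 : Matrix (Fin 2) (Fin 2) ℂ) ⊗ₖ Q 0 + !![1, 0; 0, -1] ⊗ₖ Q 1
      + !![0, 1; 1, 0] ⊗ₖ Q 2).PosSemidef := by
    intro h
    have := h.dotProduct_mulVec_nonneg (fun p : Fin 2 × Fin 2 => !![(0 : ℂ), 3; -4, 0] p.1 p.2)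
    rw [Complex.le_def] at this
    simp [hQdef, dotProduct, mulVec, Fintype.sum_prod_type, Fin.sum_univ_two,
      kroneckerMap_apply, Matrix.one_apply] at this
    norm_num at this
  refine ⟨P, Q, hP, hQdef, ?_, ?_, ?_, hwit, ?_⟩
  · intro b
    rw [key b]
    exact cone3 b
  · rw [hsep]
    exact psd_sum _ _ fun j _ => kron_psd (hσ j) (hτ j)
  · exact ⟨6, _, _, hσ, hτ, hsep⟩
  · rintro ⟨n, v, H, hv, hH, hQ⟩
    apply hwit
    rw [hQ 0, hQ 1, hQ 2]
    have heq : (1 : Matrix (Fin 2) (Fin 2) ℂ) ⊗ₖ (∑ j, v j 0 • H j)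
        + !![1, 0; 0, -1] ⊗ₖ (∑ j, v j 1 • H j)
        + !![0, 1; 1, 0] ⊗ₖ (∑ j, v j 2 • H j)
        = ∑ j, (v j 0 • (1 : Matrix (Fin 2) (Fin 2) ℂ)
            + v j 1 • !![1, 0; 0, -1] + v j 2 • !![0, 1; 1, 0]) ⊗ₖ H j := by
      rw [kron_sum_right, kron_sum_right, kron_sum_right, ← Finset.sum_add_distrib,
        ← Finset.sum_add_distrib]
      refine Finset.sum_congr rfl fun j _ => ?_
      rw [add_kronecker, add_kronecker, smul_kronecker, smul_kronecker, smul_kronecker,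
        kronecker_smul, kronecker_smul, kronecker_smul]
    rw [heq]
    refine psd_sum _ _ fun j _ => ?_
    obtain ⟨hle, h0⟩ := (cone3 (v j)).mp (key (v j) ▸ hv j)
    have hm : (v j 0 • (1 : Matrix (Fin 2) (Fin 2) ℂ)
        + v j 1 • !![1, 0; 0, -1] + v j 2 • !![0, 1; 1, 0])
        = !![((v j 0 + v j 1 : ℝ) : ℂ), ((v j 2 : ℝ) : ℂ);
             ((v j 2 : ℝ) : ℂ), ((v j 0 - v j 1 : ℝ) : ℂ)] := by
      ext a c
      fin_cases a <;> fin_cases c <;>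
        simp [Matrix.smul_apply, Matrix.one_apply, Complex.real_smul] <;> push_cast <;> ring
    rw [hm]
    exact kron_psd (cone2 (v j) hle h0) (hH j)
end
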